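/- arXiv:1001.1293 — 4 statements merged into one kernel-verified Lean document; each statement's English description precedes it below -/
import Mathlib

section
/- For each integer k ≥ 2 the following matrix identities hold: (i) x_{k+2} = 3·x_{k,0}·x_{k+1} − x_{k−1}; (ii) x_k·J·x_{k+1} = J·M_k·x_{k−1}; (iii) x_k·J·x_{k+2} = J·M_k·x_{k+1}; (iv) x_k·J·x_{k+4} = J·M_k·x_{k+1}·P·x_{k+3} − (−1)^k·x_{k+2}, where J = ((0, 1), (−1, 0)) and P = ((3, 0), (0, 0)). -/
open Polynomial Filter

noncomputable def gold : ℝ := (1 + Real.sqrt 5) / 2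

def Mmat (k : ℕ) : Matrix (Fin 2) (Fin 2) ℤ := !![3, (-1)^k; (-1)^(k+1), 0]

noncomputable def Xnorm (x : ℕ → Matrix (Fin 2) (Fin 2) ℤ) (k : ℕ) : ℝ :=
  max |(x k 0 0 : ℝ)| (max |(x k 0 1 : ℝ)| |(x k 1 1 : ℝ)|)

def MarkoffSeq (ξ : ℝ) (x : ℕ → Matrix (Fin 2) (Fin 2) ℤ) : Prop :=
  (∀ k, 1 ≤ k → x k 0 1 = x k 1 0) ∧
  (∀ k, 1 ≤ k → (x k).det = 1) ∧
  ∃ c₁ c₂ c₃ : ℝ, 0 < c₁ ∧ 0 < c₂ ∧ 0 < c₃ ∧ ∀ k, 1 ≤ k →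
    (c₁ * Xnorm x k ^ gold ≤ Xnorm x (k+1) ∧ Xnorm x (k+1) ≤ c₂ * Xnorm x k ^ gold) ∧
    (|(x k 0 0 : ℝ) * ξ - (x k 0 1 : ℝ)| ≤ c₃ / Xnorm x k ∧
     |(x k 0 1 : ℝ) * ξ - (x k 1 1 : ℝ)| ≤ c₃ / Xnorm x k) ∧
    (x (k+2) = x (k+1) * Mmat (k+1) * x k ∧ x (k+2) = x k * Mmat k * x (k+1)) ∧
    (Xnorm x k < Xnorm x (k+1) ∧ Xnorm x k < (1 + ξ^2) * |(x k 0 0 : ℝ)|)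

def polyNorm (P : Polynomial ℤ) : ℕ := P.support.sup fun i => (P.coeff i).natAbs

noncomputable def distInt (η : ℝ) : ℝ := |η - round η|

noncomputable def ratHeight (α : ℚ) : ℝ := max |(α.num : ℝ)| (α.den : ℝ)

def IsMinIntPoly (α : ℂ) (P : Polynomial ℤ) : Prop :=
  P ≠ 0 ∧ Polynomial.aeval α P = 0 ∧ P.content = 1 ∧ 0 < P.leadingCoeff ∧
  ∀ Q : Polynomial ℤ, Q ≠ 0 → Polynomial.aeval α Q = 0 → P.degree ≤ Q.degree

noncomputable def Qpoly (x : ℕ → Matrix (Fin 2) (Fin 2) ℤ) (k : ℕ) : Polynomial ℤ :=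
  Polynomial.C (x k 0 1 * x (k+1) 1 1 - x k 1 1 * x (k+1) 0 1)
  - Polynomial.C (x k 0 0 * x (k+1) 1 1 - x k 1 1 * x (k+1) 0 0) * Polynomial.X
  + Polynomial.C (x k 0 0 * x (k+1) 0 1 - x k 0 1 * x (k+1) 0 0) * Polynomial.X ^ 2

def Jmat : Matrix (Fin 2) (Fin 2) ℤ := !![0, 1; -1, 0]

def Pmat : Matrix (Fin 2) (Fin 2) ℤ := !![3, 0; 0, 0]

lemma aux_xJx (A : Matrix (Fin 2) (Fin 2) ℤ) (hs : A 0 1 = A 1 0) (hd : A.det = 1) :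
    A * Jmat * A = Jmat := by
  have h := A.det_fin_two
  rw [hd, ← hs] at h
  ext i j
  fin_cases i <;> fin_cases j <;>
    simp [Jmat, Matrix.mul_apply, Fin.sum_univ_two, ← hs] <;>
    first | ring1 | linear_combination h | linear_combination -h

lemma aux_Mper (k : ℕ) : Mmat (k+2) = Mmat k := by
  simp [Mmat, pow_succ]

lemma aux_MPJ (k : ℕ) : Mmat k = Pmat + ((-1:ℤ)^k) • Jmat := by
  rcases Nat.even_or_odd k with hk | hk <;>
  · ext i j
    fin_cases i <;> fin_cases j <;>
      simp [Mmat, Pmat, Jmat, pow_succ, hk.neg_one_pow]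

lemma aux_JMJM (k : ℕ) : Jmat * Mmat k * Jmat * Mmat (k+1) = -1 := by
  rcases Nat.even_or_odd k with hk | hk <;>
  · ext i j
    fin_cases i <;> fin_cases j <;>
      simp [Jmat, Mmat, Matrix.mul_apply, Fin.sum_univ_two, pow_succ, hk.neg_one_pow]

lemma aux_smul_one (a : ℤ) : a • (1 : Matrix (Fin 2) (Fin 2) ℤ) = !![a, 0; 0, a] := by
  ext i j; fin_cases i <;> fin_cases j <;> simp

lemma aux_CH (A : Matrix (Fin 2) (Fin 2) ℤ) (hs : A 0 1 = A 1 0) (hd : A.det = 1) (k : ℕ) :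
    ((3 * A 0 0) • (1 : Matrix (Fin 2) (Fin 2) ℤ) - A * Mmat k) * (A * Mmat k) = 1 := by
  have h := A.det_fin_two
  rw [hd, ← hs] at h
  rw [aux_smul_one]
  rcases Nat.even_or_odd k with hk | hk <;>
  · ext i j
    fin_cases i <;> fin_cases j <;>
      simp [Mmat, Matrix.mul_apply, Matrix.sub_apply, Matrix.one_apply,
        Fin.sum_univ_two, pow_succ, hk.neg_one_pow, ← hs] <;>
      first | ring1 | linear_combination h | linear_combination -h

theorem stmt5' (x : ℕ → Matrix (Fin 2) (Fin 2) ℤ)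
    (hs : ∀ k, 1 ≤ k → x k 0 1 = x k 1 0)
    (hd : ∀ k, 1 ≤ k → (x k).det = 1)
    (r1 : ∀ k, 1 ≤ k → x (k+2) = x (k+1) * Mmat (k+1) * x k)
    (r2 : ∀ k, 1 ≤ k → x (k+2) = x k * Mmat k * x (k+1)) :
    ∀ k, 2 ≤ k →
      x (k+2) = (3 * x k 0 0) • x (k+1) - x (k-1) ∧
      x k * Jmat * x (k+1) = Jmat * Mmat k * x (k-1) ∧
      x k * Jmat * x (k+2) = Jmat * Mmat k * x (k+1) ∧
      x k * Jmat * x (k+4) =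
        Jmat * Mmat k * x (k+1) * Pmat * x (k+3) - ((-1)^k : ℤ) • x (k+2) := by
  have hJ : ∀ k, 1 ≤ k → x k * Jmat * x k = Jmat := fun k hk =>
    aux_xJx (x k) (hs k hk) (hd k hk)
  have hiii : ∀ n, 1 ≤ n → x n * Jmat * x (n+2) = Jmat * Mmat n * x (n+1) := by
    intro n hn
    rw [r2 n hn]
    simp only [← mul_assoc]
    rw [hJ n hn]
  intro k hk
  obtain ⟨m, rfl⟩ : ∃ m, k = m + 2 := ⟨k - 2, by omega⟩
  have e1 : x (m+4) = x (m+2) * Mmat (m+2) * x (m+3) := r2 (m+2) (by omega)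
  have e2 : x (m+3) = x (m+2) * Mmat (m+2) * x (m+1) := r1 (m+1) (by omega)
  refine ⟨?_, ?_, ?_, ?_⟩
  · -- (i)
    have hCH := aux_CH (x (m+2)) (hs _ (by omega)) (hd _ (by omega)) (m+2)
    have h2 : ((3 * x (m+2) 0 0) • (1 : Matrix (Fin 2) (Fin 2) ℤ) - x (m+2) * Mmat (m+2))
        * (x (m+2) * Mmat (m+2) * x (m+1)) = x (m+1) := by
      rw [← mul_assoc, hCH, one_mul]
    rw [sub_mul, smul_mul_assoc, one_mul] at h2
    show x (m+4) = (3 * x (m+2) 0 0) • x (m+3) - x (m+1)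
    rw [sub_eq_iff_eq_add] at h2
    rw [e1, e2, h2]
    abel
  · -- (ii)
    show x (m+2) * Jmat * x (m+3) = Jmat * Mmat (m+2) * x (m+1)
    rw [e2]
    simp only [← mul_assoc]
    rw [hJ (m+2) (by omega)]
  · -- (iii)
    exact hiii (m+2) (by omega)
  · -- (iv)
    have e4 : x (m+6) = x (m+4) * Mmat (m+2) * x (m+5) := by
      rw [← aux_Mper (m+2)]; exact r2 (m+4) (by omega)
    have h3 : x (m+2) * Jmat * x (m+4) = Jmat * Mmat (m+2) * x (m+3) := hiii (m+2) (by omega)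
    have h4 : x (m+3) * Jmat * x (m+5) = Jmat * Mmat (m+3) * x (m+4) := hiii (m+3) (by omega)
    have hJM : Jmat * Mmat (m+2) * Jmat * Mmat (m+3) = -1 := aux_JMJM (m+2)
    calc x (m+2) * Jmat * x (m+6)
        = (x (m+2) * Jmat * x (m+4)) * Mmat (m+2) * x (m+5) := by
          rw [e4]; simp only [mul_assoc]
      _ = Jmat * Mmat (m+2) * x (m+3) * Mmat (m+2) * x (m+5) := by rw [h3]
      _ = Jmat * Mmat (m+2) * x (m+3) * (Pmat + ((-1:ℤ)^(m+2)) • Jmat) * x (m+5) := by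
          rw [← aux_MPJ (m+2)]
      _ = Jmat * Mmat (m+2) * x (m+3) * Pmat * x (m+5)
          + ((-1:ℤ)^(m+2)) • (Jmat * Mmat (m+2) * (x (m+3) * Jmat * x (m+5))) := by
          simp only [mul_add, add_mul, mul_smul_comm, smul_mul_assoc, mul_assoc]
      _ = Jmat * Mmat (m+2) * x (m+3) * Pmat * x (m+5)
          + ((-1:ℤ)^(m+2)) • ((Jmat * Mmat (m+2) * Jmat * Mmat (m+3)) * x (m+4)) := by
          rw [h4]; simp only [mul_assoc]
      _ = Jmat * Mmat (m+2) * x (m+3) * Pmat * x (m+5) - ((-1:ℤ)^(m+2)) • x (m+4) := by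
          rw [hJM]; simp only [neg_mul, one_mul, smul_neg]; abel

theorem stmt5 (ξ : ℝ) (x : ℕ → Matrix (Fin 2) (Fin 2) ℤ) (hx : MarkoffSeq ξ x) :
    ∀ k, 2 ≤ k →
      x (k+2) = (3 * x k 0 0) • x (k+1) - x (k-1) ∧
      x k * Jmat * x (k+1) = Jmat * Mmat k * x (k-1) ∧
      x k * Jmat * x (k+2) = Jmat * Mmat k * x (k+1) ∧
      x k * Jmat * x (k+4) =
        Jmat * Mmat k * x (k+1) * Pmat * x (k+3) - ((-1)^k : ℤ) • x (k+2) := by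
  obtain ⟨hs, hd, c₁, c₂, c₃, -, -, -, hmain⟩ := hx
  exact stmt5' x hs hd (fun k hk => ((hmain k hk).2.2.1).1) (fun k hk => ((hmain k hk).2.2.1).2)
end

section
/- There exists a constant c > 0 such that for every integer k ≥ 2: (a) |x_{k,0}·x_{k+2,2}·ξ − A_k| ≤ c/X_{k+1}; (b) |x_{k,1}·x_{k+2,2}·ξ − B_k + (−1)^k·x_{k+1,2}·ξ| ≤ c/X_{k+1}; (c) |x_{k,0}·x_{k+1,2}·ξ − C_k| ≤ c/X_{k−1}; (d) |x_{k,1}·x_{k+1,2}·ξ − D_k + (−1)^k·x_{k−1,2}·ξ| ≤ c/X_{k−1}; (e) there exists an integer E_k with |x_{k,0}·x_{k+4,2}·ξ − E_k| ≤ c/X_{k+2}; (f) there exists an integer F_k with |x_{k,1}·x_{k+4,2}·ξ − F_k + (−1)^k·x_{k+2,2}·ξ| ≤ c/X_{k+2}. -/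
open Polynomial Filter

lemma keySa (ξ e a b d A B D : ℝ) (he : e^2 = 1) (hdet : a*d - b^2 = 1)
    (hg4 : (3*b - e*d)*A + e*b*B = (3*a - e*b)*B + e*a*D) :
    a*((3*b - e*d)*B + e*b*D)*ξ - (b*((3*b - e*d)*B + e*b*D) - e*D)
    = e*(3*b - e*d)*(((3*a - e*b)*A + e*a*B)*ξ - ((3*a - e*b)*B + e*a*D))
    + (2*b - 3*e*a)*(((3*a - e*b)*B + e*a*D)*ξ - ((3*b - e*d)*B + e*b*D)) := by
  linear_combination
    ((-1) * D * e + (-3) * B + (3) * B * e^2 + (-1) * B * ξ * e + B * ξ * e^3) * hdet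
    + ((3) * B + B * ξ * e + d^2 * A * e + (-1) * b * d * B * e + (-3) * b * d * A
        + (-1) * b * d * A * ξ * e + b^2 * B * ξ * e + (3) * b^2 * A * ξ) * he
    + ((-1) * d + d * e^2 + b * ξ + (-3) * a * ξ * e) * hg4

lemma keySb (ξ e a b d A B D : ℝ) (he : e^2 = 1) (hdet : a*d - b^2 = 1)
    (hg4 : (3*b - e*d)*A + e*b*B = (3*a - e*b)*B + e*a*D) :
    b*((3*b - e*d)*B + e*b*D)*ξ - (d*((3*b - e*d)*B + e*b*D) - 3*D) + e*D*ξ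
    = 3*(3*b - e*d)*(((3*a - e*b)*A + e*a*B)*ξ - ((3*a - e*b)*B + e*a*D))
    + (d + 3*e*b - 9*a)*(((3*a - e*b)*B + e*a*D)*ξ - ((3*b - e*d)*B + e*b*D)) := by
  linear_combination
    ((-3) * D * e^2 + (-1) * D * ξ * e) * hdet
    + ((-3) * D + (-3) * b^2 * B * ξ + (3) * a * d * B * ξ) * he
    + ((3) * b * ξ * e + (-9) * a * ξ) * hg4

lemma keySc (ξ e p q r a b d : ℝ) (he : e^2 = 1) (hdet : a*d - b^2 = 1)
    (hg5 : (3*q + e*r)*a - e*q*b = (3*p + e*q)*b - e*p*d) :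
    a*((3*q + e*r)*b - e*q*d)*ξ - (b*((3*q + e*r)*b - e*q*d) - e*r)
    = e*(3*b - e*d)*(((3*p + e*q)*a - e*p*b)*ξ - ((3*p + e*q)*b - e*p*d))
    + (2*b - 3*e*a)*(((3*p + e*q)*b - e*p*d)*ξ - ((3*q + e*r)*b - e*q*d)) := by
  linear_combination
    ((-1) * r * e + (-3) * q + (3) * q * e^2 + (-1) * q * ξ * e + q * ξ * e^3) * hdet
    + ((3) * q + q * ξ * e + (-1) * q * b * d * e + q * b^2 * ξ * e + p * d^2 * e
        + (-3) * p * b * d + (-1) * p * b * d * ξ * e + (3) * p * b^2 * ξ) * he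
    + (d + (-3) * b * e + b * ξ) * hg5

lemma keySd (ξ e p q r a b d : ℝ) (he : e^2 = 1) (hdet : a*d - b^2 = 1)
    (hg5 : (3*q + e*r)*a - e*q*b = (3*p + e*q)*b - e*p*d) :
    b*((3*q + e*r)*b - e*q*d)*ξ - (d*((3*q + e*r)*b - e*q*d) - 3*r) + e*r*ξ
    = 3*(3*b - e*d)*(((3*p + e*q)*a - e*p*b)*ξ - ((3*p + e*q)*b - e*p*d))
    + (d + 3*e*b - 9*a)*(((3*p + e*q)*b - e*p*d)*ξ - ((3*q + e*r)*b - e*q*d)) := by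
  linear_combination
    ((-3) * r + (-1) * r * ξ * e) * hdet
    + ((3) * r * b^2 + (-3) * r * a * d + (-3) * q * b^2 * ξ + (3) * q * a * d * ξ) * he
    + ((3) * d * e + d * ξ + (-9) * b) * hg5

lemma abs_lin2 (u v p q X : ℝ) (hp : |p| ≤ X) (hq : |q| ≤ X) :
    |u*p + v*q| ≤ (|u| + |v|)*X := by
  calc |u*p + v*q| ≤ |u*p| + |v*q| := abs_add_le _ _
    _ = |u| * |p| + |v| * |q| := by rw [abs_mul, abs_mul]
    _ ≤ |u| * X + |v| * X :=
        add_le_add (mul_le_mul_of_nonneg_left hp (abs_nonneg u))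
          (mul_le_mul_of_nonneg_left hq (abs_nonneg v))
    _ = (|u| + |v|)*X := by ring

lemma abs_lin3 (u v w p q r X : ℝ) (hp : |p| ≤ X) (hq : |q| ≤ X) (hr : |r| ≤ X) :
    |u*p + v*q + w*r| ≤ (|u| + |v| + |w|)*X := by
  calc |u*p + v*q + w*r| ≤ |u*p + v*q| + |w*r| := abs_add_le _ _
    _ ≤ (|u| + |v|)*X + |w| * |r| := by
        rw [abs_mul]; exact add_le_add (abs_lin2 u v p q X hp hq) le_rfl
    _ ≤ (|u| + |v|)*X + |w| * X := by
        exact add_le_add le_rfl (mul_le_mul_of_nonneg_left hr (abs_nonneg w))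
    _ = (|u| + |v| + |w|)*X := by ring

lemma Sabs (ξ e a b d A B D Xj s : ℝ) (habs : |e| = 1)
    (ha : |a| ≤ Xj) (hb : |b| ≤ Xj) (hd : |d| ≤ Xj)
    (h1 : |A*ξ - B| ≤ s) (h2 : |B*ξ - D| ≤ s) (hs : 0 ≤ s) :
    |e*(3*b - e*d)*(A*ξ - B) + (2*b - 3*e*a)*(B*ξ - D)| ≤ 9*(Xj*s) := by
  have hXj : (0:ℝ) ≤ Xj := (abs_nonneg a).trans ha
  have c1 : |e*(3*b - e*d)| ≤ 4*Xj := by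
    rw [abs_mul, habs, one_mul, show 3*b - e*d = 3*b + (-e)*d from by ring]
    have h := abs_lin2 3 (-e) b d Xj hb hd
    rw [abs_neg, habs, show |(3:ℝ)| = 3 from by norm_num] at h
    linarith
  have c2 : |2*b - 3*e*a| ≤ 5*Xj := by
    rw [show 2*b - 3*e*a = 2*b + (-(3*e))*a from by ring]
    have h := abs_lin2 2 (-(3*e)) b a Xj hb ha
    rw [abs_neg, abs_mul, habs, show |(3:ℝ)| = 3 from by norm_num,
        show |(2:ℝ)| = 2 from by norm_num] at h
    linarith
  calc |e*(3*b - e*d)*(A*ξ - B) + (2*b - 3*e*a)*(B*ξ - D)|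
      ≤ |e*(3*b - e*d)*(A*ξ - B)| + |(2*b - 3*e*a)*(B*ξ - D)| := abs_add_le _ _
    _ ≤ (4*Xj)*s + (5*Xj)*s := by
        have t1 : |e*(3*b - e*d)*(A*ξ - B)| ≤ (4*Xj)*s := by
          rw [abs_mul]; exact mul_le_mul c1 h1 (abs_nonneg _) (by linarith)
        have t2 : |(2*b - 3*e*a)*(B*ξ - D)| ≤ (5*Xj)*s := by
          rw [abs_mul]; exact mul_le_mul c2 h2 (abs_nonneg _) (by linarith)
        linarith
    _ = 9*(Xj*s) := by ring

lemma Sabs' (ξ e a b d A B D Xj s : ℝ) (habs : |e| = 1)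
    (ha : |a| ≤ Xj) (hb : |b| ≤ Xj) (hd : |d| ≤ Xj)
    (h1 : |A*ξ - B| ≤ s) (h2 : |B*ξ - D| ≤ s) (hs : 0 ≤ s) :
    |3*(3*b - e*d)*(A*ξ - B) + (d + 3*e*b - 9*a)*(B*ξ - D)| ≤ 25*(Xj*s) := by
  have hXj : (0:ℝ) ≤ Xj := (abs_nonneg a).trans ha
  have c1 : |3*(3*b - e*d)| ≤ 12*Xj := by
    rw [abs_mul, show |(3:ℝ)| = 3 from by norm_num,
        show 3*b - e*d = 3*b + (-e)*d from by ring]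
    have h := abs_lin2 3 (-e) b d Xj hb hd
    rw [abs_neg, habs, show |(3:ℝ)| = 3 from by norm_num] at h
    linarith
  have c2 : |d + 3*e*b - 9*a| ≤ 13*Xj := by
    rw [show d + 3*e*b - 9*a = 1*d + (3*e)*b + (-9)*a from by ring]
    have h := abs_lin3 1 (3*e) (-9) d b a Xj hd hb ha
    rw [abs_mul, habs, show |(1:ℝ)| = 1 from by norm_num,
        show |(3:ℝ)| = 3 from by norm_num, show |(-9:ℝ)| = 9 from by norm_num] at h
    linarith
  calc |3*(3*b - e*d)*(A*ξ - B) + (d + 3*e*b - 9*a)*(B*ξ - D)|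
      ≤ |3*(3*b - e*d)*(A*ξ - B)| + |(d + 3*e*b - 9*a)*(B*ξ - D)| := abs_add_le _ _
    _ ≤ (12*Xj)*s + (13*Xj)*s := by
        have t1 : |3*(3*b - e*d)*(A*ξ - B)| ≤ (12*Xj)*s := by
          rw [abs_mul]; exact mul_le_mul c1 h1 (abs_nonneg _) (by linarith)
        have t2 : |(d + 3*e*b - 9*a)*(B*ξ - D)| ≤ (13*Xj)*s := by
          rw [abs_mul]; exact mul_le_mul c2 h2 (abs_nonneg _) (by linarith)
        linarith
    _ = 25*(Xj*s) := by ring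

lemma final1 (N c₃ ρ Xs Xt Xm : ℝ) (hN : N ≤ 25) (hN0 : 0 ≤ N)
    (hc₃ : 0 < c₃) (hρ : 0 < ρ) (hρ1 : ρ ≤ 1)
    (hXs : 1 ≤ Xs) (hXt : 1 ≤ Xt) (hXm : 1 ≤ Xm)
    (hg : ρ * (Xs * Xt) ≤ Xm) :
    N*(Xs*(c₃/Xm)) ≤ 200*c₃/ρ^2/Xt := by
  have hXm0 : (0:ℝ) < Xm := by linarith
  have hXt0 : (0:ℝ) < Xt := by linarith
  have hXs0 : (0:ℝ) < Xs := by linarith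
  have hkey : ρ^2*(Xs*Xt) ≤ Xm := by
    calc ρ^2*(Xs*Xt) = ρ*(ρ*(Xs*Xt)) := by ring
      _ ≤ 1*(ρ*(Xs*Xt)) := by
          apply mul_le_mul_of_nonneg_right hρ1
          positivity
      _ = ρ*(Xs*Xt) := by ring
      _ ≤ Xm := hg
  rw [div_div, le_div_iff₀ (by positivity : (0:ℝ) < ρ^2*Xt)]
  calc N*(Xs*(c₃/Xm))*(ρ^2*Xt) = (N*c₃)*((ρ^2*(Xs*Xt))/Xm) := by ring
    _ ≤ (N*c₃)*1 := by
        apply mul_le_mul_of_nonneg_left _ (by positivity)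
        exact (div_le_one hXm0).mpr hkey
    _ = N*c₃ := by ring
    _ ≤ 200*c₃ := by nlinarith

lemma final2 (c₃ ρ X3 X4 X5 X6 : ℝ)
    (hc₃ : 0 < c₃) (hρ : 0 < ρ) (hρ1 : ρ ≤ 1)
    (hX3 : 1 ≤ X3) (hX4 : 1 ≤ X4) (hX5 : 1 ≤ X5) (hX6 : 1 ≤ X6)
    (hg3 : ρ * (X3 * X4) ≤ X5) (hg4 : ρ * (X4 * X5) ≤ X6) :
    X3*(25*(X4*(c₃/X6))) + X3*(9*(X4*(c₃/X6))) + 9*(X3*(c₃/X5)) ≤ 200*c₃/ρ^2/X4 := by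
  have h5 : (0:ℝ) < X5 := by linarith
  have h6 : (0:ℝ) < X6 := by linarith
  have k1 : ρ^2*(X3*(X4*X4)) ≤ X6 := by
    calc ρ^2*(X3*(X4*X4)) = (ρ*X4)*(ρ*(X3*X4)) := by ring
      _ ≤ (ρ*X4)*X5 := by
          apply mul_le_mul_of_nonneg_left hg3
          positivity
      _ = ρ*(X4*X5) := by ring
      _ ≤ X6 := hg4
  have k2 : ρ^2*(X3*X4) ≤ X5 := by
    calc ρ^2*(X3*X4) = ρ*(ρ*(X3*X4)) := by ring
      _ ≤ 1*(ρ*(X3*X4)) := by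
          apply mul_le_mul_of_nonneg_right hρ1
          positivity
      _ = ρ*(X3*X4) := by ring
      _ ≤ X5 := hg3
  rw [div_div, le_div_iff₀ (by positivity : (0:ℝ) < ρ^2*X4)]
  calc (X3*(25*(X4*(c₃/X6))) + X3*(9*(X4*(c₃/X6))) + 9*(X3*(c₃/X5)))*(ρ^2*X4)
      = (34*c₃)*((ρ^2*(X3*(X4*X4)))/X6) + (9*c₃)*((ρ^2*(X3*X4))/X5) := by ring
    _ ≤ (34*c₃)*1 + (9*c₃)*1 :=
        add_le_add (mul_le_mul_of_nonneg_left ((div_le_one h6).mpr k1) (by positivity))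
          (mul_le_mul_of_nonneg_left ((div_le_one h5).mpr k2) (by positivity))
    _ ≤ 200*c₃ := by nlinarith

lemma final3 (c₃ ρ X3 X4 X5 X6 : ℝ)
    (hc₃ : 0 < c₃) (hρ : 0 < ρ) (hρ1 : ρ ≤ 1)
    (hX3 : 1 ≤ X3) (hX4 : 1 ≤ X4) (hX5 : 1 ≤ X5) (hX6 : 1 ≤ X6)
    (hg3 : ρ * (X3 * X4) ≤ X5) (hg4 : ρ * (X4 * X5) ≤ X6) :
    (4*X3)*(9*(X4*(c₃/X6))) + (4*X3)*(25*(X4*(c₃/X6))) + 25*(X3*(c₃/X5))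
      + 3*(9*(X3*(c₃/X5))) ≤ 200*c₃/ρ^2/X4 := by
  have h5 : (0:ℝ) < X5 := by linarith
  have h6 : (0:ℝ) < X6 := by linarith
  have k1 : ρ^2*(X3*(X4*X4)) ≤ X6 := by
    calc ρ^2*(X3*(X4*X4)) = (ρ*X4)*(ρ*(X3*X4)) := by ring
      _ ≤ (ρ*X4)*X5 := by
          apply mul_le_mul_of_nonneg_left hg3
          positivity
      _ = ρ*(X4*X5) := by ring
      _ ≤ X6 := hg4
  have k2 : ρ^2*(X3*X4) ≤ X5 := by
    calc ρ^2*(X3*X4) = ρ*(ρ*(X3*X4)) := by ring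
      _ ≤ 1*(ρ*(X3*X4)) := by
          apply mul_le_mul_of_nonneg_right hρ1
          positivity
      _ = ρ*(X3*X4) := by ring
      _ ≤ X5 := hg3
  rw [div_div, le_div_iff₀ (by positivity : (0:ℝ) < ρ^2*X4)]
  calc ((4*X3)*(9*(X4*(c₃/X6))) + (4*X3)*(25*(X4*(c₃/X6))) + 25*(X3*(c₃/X5))
        + 3*(9*(X3*(c₃/X5))))*(ρ^2*X4)
      = (136*c₃)*((ρ^2*(X3*(X4*X4)))/X6) + (52*c₃)*((ρ^2*(X3*X4))/X5) := by ring
    _ ≤ (136*c₃)*1 + (52*c₃)*1 :=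
        add_le_add (mul_le_mul_of_nonneg_left ((div_le_one h6).mpr k1) (by positivity))
          (mul_le_mul_of_nonneg_left ((div_le_one h5).mpr k2) (by positivity))
    _ ≤ 200*c₃ := by nlinarith

lemma abs3 (p q r : ℝ) : |p - q - r| ≤ |p| + |q| + |r| := by
  have h : p - q - r = p + (-q + -r) := by ring
  rw [h]
  refine (abs_add_le _ _).trans ?_
  have h2 := abs_add_le (-q) (-r)
  rw [abs_neg, abs_neg] at h2
  linarith

lemma abs4 (p q r s : ℝ) : |p + q - r - s| ≤ |p| + |q| + |r| + |s| := by
  have h : p + q - r - s = p + (q + (-r + -s)) := by ring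
  rw [h]
  refine (abs_add_le _ _).trans ?_
  have h2 := abs_add_le q (-r + -s)
  have h3 := abs_add_le (-r) (-s)
  rw [abs_neg, abs_neg] at h3
  linarith

lemma stmt6_core (ξ e c₃ ρ : ℝ) (X1 X2 X3 X4 X5 X6 : ℝ)
    (y0 y1 y2 z0 z1 z2 w0 w1 w2 u0 u1 u2 v0 v1 v2 t0 t1 t2 : ℝ)
    (he : e^2 = 1) (habs : |e| = 1)
    (hc₃ : 0 < c₃) (hρ : 0 < ρ) (hρ1 : ρ ≤ 1)
    (hX1 : 1 ≤ X1) (hX2 : 1 ≤ X2) (hX3 : 1 ≤ X3)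
    (hX4 : 1 ≤ X4) (hX5 : 1 ≤ X5) (hX6 : 1 ≤ X6)
    (hz0 : |z0| ≤ X2) (hz1 : |z1| ≤ X2) (hz2 : |z2| ≤ X2)
    (hw0 : |w0| ≤ X3) (hw1 : |w1| ≤ X3) (hw2 : |w2| ≤ X3)
    (hu0 : |u0| ≤ X4) (hu1 : |u1| ≤ X4) (hu2 : |u2| ≤ X4)
    (hD31 : |w0*ξ - w1| ≤ c₃/X3) (hD32 : |w1*ξ - w2| ≤ c₃/X3)
    (hD41 : |u0*ξ - u1| ≤ c₃/X4) (hD42 : |u1*ξ - u2| ≤ c₃/X4)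
    (hD51 : |v0*ξ - v1| ≤ c₃/X5) (hD52 : |v1*ξ - v2| ≤ c₃/X5)
    (hD61 : |t0*ξ - t1| ≤ c₃/X6) (hD62 : |t1*ξ - t2| ≤ c₃/X6)
    (hg1 : ρ * (X1 * X2) ≤ X3) (hg2 : ρ * (X2 * X3) ≤ X4)
    (hg3 : ρ * (X3 * X4) ≤ X5) (hg4 : ρ * (X4 * X5) ≤ X6)
    (hdz : z0*z2 - z1^2 = 1) (hdw : w0*w2 - w1^2 = 1) (hdu : u0*u2 - u1^2 = 1)
    (hr1_00 : w0 = (3*y0 - -e*y1)*z0 + -e*y0*z1)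
    (hr1_01 : w1 = (3*y0 - -e*y1)*z1 + -e*y0*z2)
    (hr1_10 : w1 = (3*y1 - -e*y2)*z0 + -e*y1*z1)
    (hr1_11 : w2 = (3*y1 - -e*y2)*z1 + -e*y1*z2)
    (hr2_00 : u0 = (3*z0 - e*z1)*w0 + e*z0*w1)
    (hr2_01 : u1 = (3*z0 - e*z1)*w1 + e*z0*w2)
    (hr2_10 : u1 = (3*z1 - e*z2)*w0 + e*z1*w1)
    (hr2_11 : u2 = (3*z1 - e*z2)*w1 + e*z1*w2)
    (hr3_00 : v0 = (3*w0 - -e*w1)*u0 + -e*w0*u1)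
    (hr3_01 : v1 = (3*w0 - -e*w1)*u1 + -e*w0*u2)
    (hr3_10 : v1 = (3*w1 - -e*w2)*u0 + -e*w1*u1)
    (hr3_11 : v2 = (3*w1 - -e*w2)*u1 + -e*w1*u2)
    (hr4_00 : t0 = (3*u0 - e*u1)*v0 + e*u0*v1)
    (hr4_01 : t1 = (3*u0 - e*u1)*v1 + e*u0*v2)
    (hr4_10 : t1 = (3*u1 - e*u2)*v0 + e*u1*v1)
    (hr4_11 : t2 = (3*u1 - e*u2)*v1 + e*u1*v2) :
    |z0*u2*ξ - (z1*u2 - e*w2)| ≤ 200*c₃/ρ^2/X3 ∧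
    |z1*u2*ξ - (z2*u2 - 3*w2) + e*w2*ξ| ≤ 200*c₃/ρ^2/X3 ∧
    |z0*w2*ξ - (z1*w2 - e*y2)| ≤ 200*c₃/ρ^2/X1 ∧
    |z1*w2*ξ - (z2*w2 - 3*y2) + e*y2*ξ| ≤ 200*c₃/ρ^2/X1 ∧
    |z0*t2*ξ - (e*(w0*(u2*t2) - 3*(w0*v2) - w1*(u1*t2)) - e*u2)| ≤ 200*c₃/ρ^2/X4 ∧
    |z1*t2*ξ - ((-(e*w2) - 3*w1)*(u1*t2 - e*v2) + (e*w1 + 3*w0)*(u2*t2 - 3*v2)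
        - w2*v2 - 3*e*(w1*v2)) + e*u2*ξ| ≤ 200*c₃/ρ^2/X4 := by
  have hs3 : (0:ℝ) ≤ c₃/X3 := div_nonneg hc₃.le (by linarith)
  have hs4 : (0:ℝ) ≤ c₃/X4 := div_nonneg hc₃.le (by linarith)
  have hs5 : (0:ℝ) ≤ c₃/X5 := div_nonneg hc₃.le (by linarith)
  have hs6 : (0:ℝ) ≤ c₃/X6 := div_nonneg hc₃.le (by linarith)
  have habs' : |-e| = 1 := by rw [abs_neg]; exact habs
  have he' : (-e)^2 = 1 := by linear_combination he
  -- symmetry-derived relations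
  have hg4k : (3*z1 - e*z2)*w0 + e*z1*w1 = (3*z0 - e*z1)*w1 + e*z0*w2 := by
    linear_combination hr2_01 - hr2_10
  have hg5c : (3*y1 + e*y2)*z0 - e*y1*z1 = (3*y0 + e*y1)*z1 - e*y0*z2 := by
    linear_combination hr1_01 - hr1_10
  have hg43 : (3*w1 - -e*w2)*u0 + -e*w1*u1 = (3*w0 - -e*w1)*u1 + -e*w0*u2 := by
    linear_combination hr3_01 - hr3_10
  have hg44 : (3*u1 - e*u2)*v0 + e*u1*v1 = (3*u0 - e*u1)*v1 + e*u0*v2 := by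
    linear_combination hr4_01 - hr4_10
  -- adjugate relations
  have HL1 : u0*w2 - u1*w1 = 3*z0 - e*z1 := by
    linear_combination w2*hr2_00 - w1*hr2_01 + (3*z0 - e*z1)*hdw
  have HL2 : u1*w0 - u0*w1 = e*z0 := by
    linear_combination w0*hr2_01 - w1*hr2_00 + e*z0*hdw
  -- the six equalities
  have hEqa : z0*u2*ξ - (z1*u2 - e*w2)
      = e*(3*z1 - e*z2)*(u0*ξ - u1) + (2*z1 - 3*e*z0)*(u1*ξ - u2) := by
    rw [hr2_00, hr2_01, hr2_11]
    linear_combination keySa ξ e z0 z1 z2 w0 w1 w2 he hdz hg4k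
  have hEqb : z1*u2*ξ - (z2*u2 - 3*w2) + e*w2*ξ
      = 3*(3*z1 - e*z2)*(u0*ξ - u1) + (z2 + 3*e*z1 - 9*z0)*(u1*ξ - u2) := by
    rw [hr2_00, hr2_01, hr2_11]
    linear_combination keySb ξ e z0 z1 z2 w0 w1 w2 he hdz hg4k
  have hEqc : z0*w2*ξ - (z1*w2 - e*y2)
      = e*(3*z1 - e*z2)*(w0*ξ - w1) + (2*z1 - 3*e*z0)*(w1*ξ - w2) := by
    rw [hr1_00, hr1_01, hr1_11]
    linear_combination keySc ξ e y0 y1 y2 z0 z1 z2 he hdz hg5c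
  have hEqd : z1*w2*ξ - (z2*w2 - 3*y2) + e*y2*ξ
      = 3*(3*z1 - e*z2)*(w0*ξ - w1) + (z2 + 3*e*z1 - 9*z0)*(w1*ξ - w2) := by
    rw [hr1_00, hr1_01, hr1_11]
    linear_combination keySd ξ e y0 y1 y2 z0 z1 z2 he hdz hg5c
  have Ha2 : u0*t2*ξ - (u1*t2 - e*v2)
      = e*(3*u1 - e*u2)*(t0*ξ - t1) + (2*u1 - 3*e*u0)*(t1*ξ - t2) := by
    rw [hr4_00, hr4_01, hr4_11]
    linear_combination keySa ξ e u0 u1 u2 v0 v1 v2 he hdu hg44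
  have Hb2 : u1*t2*ξ - (u2*t2 - 3*v2) + e*v2*ξ
      = 3*(3*u1 - e*u2)*(t0*ξ - t1) + (u2 + 3*e*u1 - 9*u0)*(t1*ξ - t2) := by
    rw [hr4_00, hr4_01, hr4_11]
    linear_combination keySb ξ e u0 u1 u2 v0 v1 v2 he hdu hg44
  have Ha1 : w0*v2*ξ - (w1*v2 - -e*u2)
      = -e*(3*w1 - -e*w2)*(v0*ξ - v1) + (2*w1 - 3*(-e)*w0)*(v1*ξ - v2) := by
    rw [hr3_00, hr3_01, hr3_11]
    linear_combination keySa ξ (-e) w0 w1 w2 u0 u1 u2 he' hdw hg43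
  have Hb1 : w1*v2*ξ - (w2*v2 - 3*u2) + -e*u2*ξ
      = 3*(3*w1 - -e*w2)*(v0*ξ - v1) + (w2 + 3*(-e)*w1 - 9*w0)*(v1*ξ - v2) := by
    rw [hr3_00, hr3_01, hr3_11]
    linear_combination keySb ξ (-e) w0 w1 w2 u0 u1 u2 he' hdw hg43
  have HeqE : z0*t2*ξ - (e*(w0*(u2*t2) - 3*(w0*v2) - w1*(u1*t2)) - e*u2)
      = e*w0*(3*(3*u1 - e*u2)*(t0*ξ - t1) + (u2 + 3*e*u1 - 9*u0)*(t1*ξ - t2))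
        - e*w1*(e*(3*u1 - e*u2)*(t0*ξ - t1) + (2*u1 - 3*e*u0)*(t1*ξ - t2))
        - (-e*(3*w1 - -e*w2)*(v0*ξ - v1) + (2*w1 - 3*(-e)*w0)*(v1*ξ - v2)) := by
    linear_combination (e*w0)*Hb2 - (e*w1)*Ha2 - Ha1 - (e*t2*ξ)*HL2
      + (w1*v2 - w0*v2*ξ - z0*t2*ξ)*he
  have HeqF : z1*t2*ξ - ((-(e*w2) - 3*w1)*(u1*t2 - e*v2) + (e*w1 + 3*w0)*(u2*t2 - 3*v2)
        - w2*v2 - 3*e*(w1*v2)) + e*u2*ξ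
      = (-(e*w2) - 3*w1)*(e*(3*u1 - e*u2)*(t0*ξ - t1) + (2*u1 - 3*e*u0)*(t1*ξ - t2))
        + (e*w1 + 3*w0)*(3*(3*u1 - e*u2)*(t0*ξ - t1) + (u2 + 3*e*u1 - 9*u0)*(t1*ξ - t2))
        - (3*(3*w1 - -e*w2)*(v0*ξ - v1) + (w2 + 3*(-e)*w1 - 9*w0)*(v1*ξ - v2))
        - 3*e*(-e*(3*w1 - -e*w2)*(v0*ξ - v1) + (2*w1 - 3*(-e)*w0)*(v1*ξ - v2)) := by
    linear_combination (-(e*w2) - 3*w1)*Ha2 + (e*w1 + 3*w0)*Hb2 - Hb1 - (3*e)*Ha1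
      + (e*t2*ξ)*HL1 + (-3*t2*ξ)*HL2 + (-3*u2 - w1*v2*ξ - z1*t2*ξ)*he
  refine ⟨?_, ?_, ?_, ?_, ?_, ?_⟩
  · calc |z0*u2*ξ - (z1*u2 - e*w2)|
        = |e*(3*z1 - e*z2)*(u0*ξ - u1) + (2*z1 - 3*e*z0)*(u1*ξ - u2)| := by rw [hEqa]
      _ ≤ 9*(X2*(c₃/X4)) := Sabs ξ e z0 z1 z2 u0 u1 u2 X2 (c₃/X4) habs hz0 hz1 hz2 hD41 hD42 hs4
      _ ≤ 200*c₃/ρ^2/X3 := final1 9 c₃ ρ X2 X3 X4 (by norm_num) (by norm_num)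
          hc₃ hρ hρ1 hX2 hX3 hX4 hg2
  · calc |z1*u2*ξ - (z2*u2 - 3*w2) + e*w2*ξ|
        = |3*(3*z1 - e*z2)*(u0*ξ - u1) + (z2 + 3*e*z1 - 9*z0)*(u1*ξ - u2)| := by rw [hEqb]
      _ ≤ 25*(X2*(c₃/X4)) := Sabs' ξ e z0 z1 z2 u0 u1 u2 X2 (c₃/X4) habs hz0 hz1 hz2 hD41 hD42 hs4
      _ ≤ 200*c₃/ρ^2/X3 := final1 25 c₃ ρ X2 X3 X4 (by norm_num) (by norm_num)
          hc₃ hρ hρ1 hX2 hX3 hX4 hg2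
  · calc |z0*w2*ξ - (z1*w2 - e*y2)|
        = |e*(3*z1 - e*z2)*(w0*ξ - w1) + (2*z1 - 3*e*z0)*(w1*ξ - w2)| := by rw [hEqc]
      _ ≤ 9*(X2*(c₃/X3)) := Sabs ξ e z0 z1 z2 w0 w1 w2 X2 (c₃/X3) habs hz0 hz1 hz2 hD31 hD32 hs3
      _ ≤ 200*c₃/ρ^2/X1 := final1 9 c₃ ρ X2 X1 X3 (by norm_num) (by norm_num)
          hc₃ hρ hρ1 hX2 hX1 hX3 (by rw [mul_comm X2 X1]; exact hg1)
  · calc |z1*w2*ξ - (z2*w2 - 3*y2) + e*y2*ξ|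
        = |3*(3*z1 - e*z2)*(w0*ξ - w1) + (z2 + 3*e*z1 - 9*z0)*(w1*ξ - w2)| := by rw [hEqd]
      _ ≤ 25*(X2*(c₃/X3)) := Sabs' ξ e z0 z1 z2 w0 w1 w2 X2 (c₃/X3) habs hz0 hz1 hz2 hD31 hD32 hs3
      _ ≤ 200*c₃/ρ^2/X1 := final1 25 c₃ ρ X2 X1 X3 (by norm_num) (by norm_num)
          hc₃ hρ hρ1 hX2 hX1 hX3 (by rw [mul_comm X2 X1]; exact hg1)
  · have hSB2 : |3*(3*u1 - e*u2)*(t0*ξ - t1) + (u2 + 3*e*u1 - 9*u0)*(t1*ξ - t2)|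
        ≤ 25*(X4*(c₃/X6)) := Sabs' ξ e u0 u1 u2 t0 t1 t2 X4 (c₃/X6) habs hu0 hu1 hu2 hD61 hD62 hs6
    have hSA2 : |e*(3*u1 - e*u2)*(t0*ξ - t1) + (2*u1 - 3*e*u0)*(t1*ξ - t2)|
        ≤ 9*(X4*(c₃/X6)) := Sabs ξ e u0 u1 u2 t0 t1 t2 X4 (c₃/X6) habs hu0 hu1 hu2 hD61 hD62 hs6
    have hSA1 : |-e*(3*w1 - -e*w2)*(v0*ξ - v1) + (2*w1 - 3*(-e)*w0)*(v1*ξ - v2)|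
        ≤ 9*(X3*(c₃/X5)) := Sabs ξ (-e) w0 w1 w2 v0 v1 v2 X3 (c₃/X5) habs' hw0 hw1 hw2 hD51 hD52 hs5
    calc |z0*t2*ξ - (e*(w0*(u2*t2) - 3*(w0*v2) - w1*(u1*t2)) - e*u2)|
        = |e*w0*(3*(3*u1 - e*u2)*(t0*ξ - t1) + (u2 + 3*e*u1 - 9*u0)*(t1*ξ - t2))
            - e*w1*(e*(3*u1 - e*u2)*(t0*ξ - t1) + (2*u1 - 3*e*u0)*(t1*ξ - t2))
            - (-e*(3*w1 - -e*w2)*(v0*ξ - v1) + (2*w1 - 3*(-e)*w0)*(v1*ξ - v2))| := by rw [HeqE]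
      _ ≤ X3*(25*(X4*(c₃/X6))) + X3*(9*(X4*(c₃/X6))) + 9*(X3*(c₃/X5)) := by
          refine (abs3 _ _ _).trans ?_
          have b1 : |e*w0*(3*(3*u1 - e*u2)*(t0*ξ - t1) + (u2 + 3*e*u1 - 9*u0)*(t1*ξ - t2))|
              ≤ X3*(25*(X4*(c₃/X6))) := by
            rw [abs_mul, abs_mul, habs, one_mul]
            exact mul_le_mul hw0 hSB2 (abs_nonneg _) (by linarith)
          have b2 : |e*w1*(e*(3*u1 - e*u2)*(t0*ξ - t1) + (2*u1 - 3*e*u0)*(t1*ξ - t2))|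
              ≤ X3*(9*(X4*(c₃/X6))) := by
            rw [abs_mul, abs_mul, habs, one_mul]
            exact mul_le_mul hw1 hSA2 (abs_nonneg _) (by linarith)
          linarith [hSA1]
      _ ≤ 200*c₃/ρ^2/X4 := final2 c₃ ρ X3 X4 X5 X6 hc₃ hρ hρ1 hX3 hX4 hX5 hX6 hg3 hg4
  · have hSB2 : |3*(3*u1 - e*u2)*(t0*ξ - t1) + (u2 + 3*e*u1 - 9*u0)*(t1*ξ - t2)|
        ≤ 25*(X4*(c₃/X6)) := Sabs' ξ e u0 u1 u2 t0 t1 t2 X4 (c₃/X6) habs hu0 hu1 hu2 hD61 hD62 hs6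
    have hSA2 : |e*(3*u1 - e*u2)*(t0*ξ - t1) + (2*u1 - 3*e*u0)*(t1*ξ - t2)|
        ≤ 9*(X4*(c₃/X6)) := Sabs ξ e u0 u1 u2 t0 t1 t2 X4 (c₃/X6) habs hu0 hu1 hu2 hD61 hD62 hs6
    have hSA1 : |-e*(3*w1 - -e*w2)*(v0*ξ - v1) + (2*w1 - 3*(-e)*w0)*(v1*ξ - v2)|
        ≤ 9*(X3*(c₃/X5)) := Sabs ξ (-e) w0 w1 w2 v0 v1 v2 X3 (c₃/X5) habs' hw0 hw1 hw2 hD51 hD52 hs5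
    have hSB1 : |3*(3*w1 - -e*w2)*(v0*ξ - v1) + (w2 + 3*(-e)*w1 - 9*w0)*(v1*ξ - v2)|
        ≤ 25*(X3*(c₃/X5)) := Sabs' ξ (-e) w0 w1 w2 v0 v1 v2 X3 (c₃/X5) habs' hw0 hw1 hw2 hD51 hD52 hs5
    have hc1 : |-(e*w2) - 3*w1| ≤ 4*X3 := by
      rw [show -(e*w2) - 3*w1 = (-e)*w2 + (-3)*w1 from by ring]
      have h := abs_lin2 (-e) (-3) w2 w1 X3 hw2 hw1
      rw [abs_neg, habs, show |(-3:ℝ)| = 3 from by norm_num] at h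
      linarith
    have hc2 : |e*w1 + 3*w0| ≤ 4*X3 := by
      have h := abs_lin2 e 3 w1 w0 X3 hw1 hw0
      rw [habs, show |(3:ℝ)| = 3 from by norm_num] at h
      linarith
    calc |z1*t2*ξ - ((-(e*w2) - 3*w1)*(u1*t2 - e*v2) + (e*w1 + 3*w0)*(u2*t2 - 3*v2)
            - w2*v2 - 3*e*(w1*v2)) + e*u2*ξ|
        = |(-(e*w2) - 3*w1)*(e*(3*u1 - e*u2)*(t0*ξ - t1) + (2*u1 - 3*e*u0)*(t1*ξ - t2))
            + (e*w1 + 3*w0)*(3*(3*u1 - e*u2)*(t0*ξ - t1) + (u2 + 3*e*u1 - 9*u0)*(t1*ξ - t2))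
            - (3*(3*w1 - -e*w2)*(v0*ξ - v1) + (w2 + 3*(-e)*w1 - 9*w0)*(v1*ξ - v2))
            - 3*e*(-e*(3*w1 - -e*w2)*(v0*ξ - v1) + (2*w1 - 3*(-e)*w0)*(v1*ξ - v2))| := by rw [HeqF]
      _ ≤ (4*X3)*(9*(X4*(c₃/X6))) + (4*X3)*(25*(X4*(c₃/X6))) + 25*(X3*(c₃/X5))
            + 3*(9*(X3*(c₃/X5))) := by
          refine (abs4 _ _ _ _).trans ?_
          have b1 : |(-(e*w2) - 3*w1)*(e*(3*u1 - e*u2)*(t0*ξ - t1) + (2*u1 - 3*e*u0)*(t1*ξ - t2))|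
              ≤ (4*X3)*(9*(X4*(c₃/X6))) := by
            rw [abs_mul]
            exact mul_le_mul hc1 hSA2 (abs_nonneg _) (by linarith)
          have b2 : |(e*w1 + 3*w0)*(3*(3*u1 - e*u2)*(t0*ξ - t1) + (u2 + 3*e*u1 - 9*u0)*(t1*ξ - t2))|
              ≤ (4*X3)*(25*(X4*(c₃/X6))) := by
            rw [abs_mul]
            exact mul_le_mul hc2 hSB2 (abs_nonneg _) (by linarith)
          have b4 : |3*e*(-e*(3*w1 - -e*w2)*(v0*ξ - v1) + (2*w1 - 3*(-e)*w0)*(v1*ξ - v2))|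
              ≤ 3*(9*(X3*(c₃/X5))) := by
            rw [abs_mul, abs_mul, habs, show |(3:ℝ)| = 3 from by norm_num, mul_one]
            exact mul_le_mul_of_nonneg_left hSA1 (by norm_num)
          linarith [hSB1]
      _ ≤ 200*c₃/ρ^2/X4 := final3 c₃ ρ X3 X4 X5 X6 hc₃ hρ hρ1 hX3 hX4 hX5 hX6 hg3 hg4

lemma rec_entriesR (x : ℕ → Matrix (Fin 2) (Fin 2) ℤ) (j : ℕ)
    (h : x (j+2) = x j * Mmat j * x (j+1)) (i l : Fin 2) :
    ((x (j+2) i l : ℤ) : ℝ) =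
      (3*((x j i 0 : ℤ):ℝ) - (-1)^j*((x j i 1 : ℤ):ℝ))*((x (j+1) 0 l : ℤ):ℝ)
      + (-1)^j*((x j i 0 : ℤ):ℝ)*((x (j+1) 1 l : ℤ):ℝ) := by
  have hh : x (j+2) i l = (x j * Mmat j * x (j+1)) i l := by rw [h]
  simp [Matrix.mul_apply, Fin.sum_univ_two, Mmat] at hh
  have hc := congrArg (fun z : ℤ => (z : ℝ)) hh
  push_cast at hc
  rw [pow_succ] at hc
  linear_combination hc

lemma Xnorm_ge_one (x : ℕ → Matrix (Fin 2) (Fin 2) ℤ) (j : ℕ)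
    (hdet : (x j).det = 1) (hsym : x j 0 1 = x j 1 0) : (1:ℝ) ≤ Xnorm x j := by
  by_contra hcon
  push_neg at hcon
  have h0 : |((x j 0 0 : ℤ):ℝ)| < 1 := lt_of_le_of_lt (le_max_left _ _) hcon
  have h1 : |((x j 0 1 : ℤ):ℝ)| < 1 :=
    lt_of_le_of_lt ((le_max_left _ _).trans (le_max_right _ _)) hcon
  have h2 : |((x j 1 1 : ℤ):ℝ)| < 1 :=
    lt_of_le_of_lt ((le_max_right _ _).trans (le_max_right _ _)) hcon
  have z0 : x j 0 0 = 0 := by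
    have hlt := abs_lt.mp h0
    have ha : (-1:ℤ) < x j 0 0 := by exact_mod_cast hlt.1
    have hb : x j 0 0 < 1 := by exact_mod_cast hlt.2
    omega
  have z1 : x j 0 1 = 0 := by
    have hlt := abs_lt.mp h1
    have ha : (-1:ℤ) < x j 0 1 := by exact_mod_cast hlt.1
    have hb : x j 0 1 < 1 := by exact_mod_cast hlt.2
    omega
  have z2 : x j 1 1 = 0 := by
    have hlt := abs_lt.mp h2
    have ha : (-1:ℤ) < x j 1 1 := by exact_mod_cast hlt.1
    have hb : x j 1 1 < 1 := by exact_mod_cast hlt.2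
    omega
  rw [Matrix.det_fin_two, ← hsym, z0, z1, z2] at hdet
  norm_num at hdet

theorem stmt6 (ξ : ℝ) (x : ℕ → Matrix (Fin 2) (Fin 2) ℤ) (hx : MarkoffSeq ξ x) :
    ∃ c : ℝ, 0 < c ∧ ∀ k, 2 ≤ k →
      |(x k 0 0 : ℝ) * (x (k+2) 1 1 : ℝ) * ξ -
        ((x k 0 1 : ℝ) * (x (k+2) 1 1 : ℝ) - (-1)^k * (x (k+1) 1 1 : ℝ))|
          ≤ c / Xnorm x (k+1) ∧
      |(x k 0 1 : ℝ) * (x (k+2) 1 1 : ℝ) * ξ -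
        ((x k 1 1 : ℝ) * (x (k+2) 1 1 : ℝ) - 3 * (x (k+1) 1 1 : ℝ)) +
          (-1)^k * (x (k+1) 1 1 : ℝ) * ξ| ≤ c / Xnorm x (k+1) ∧
      |(x k 0 0 : ℝ) * (x (k+1) 1 1 : ℝ) * ξ -
        ((x k 0 1 : ℝ) * (x (k+1) 1 1 : ℝ) - (-1)^k * (x (k-1) 1 1 : ℝ))|
          ≤ c / Xnorm x (k-1) ∧
      |(x k 0 1 : ℝ) * (x (k+1) 1 1 : ℝ) * ξ -
        ((x k 1 1 : ℝ) * (x (k+1) 1 1 : ℝ) - 3 * (x (k-1) 1 1 : ℝ)) +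
          (-1)^k * (x (k-1) 1 1 : ℝ) * ξ| ≤ c / Xnorm x (k-1) ∧
      (∃ E : ℤ, |(x k 0 0 : ℝ) * (x (k+4) 1 1 : ℝ) * ξ - (E : ℝ)|
          ≤ c / Xnorm x (k+2)) ∧
      (∃ F : ℤ, |(x k 0 1 : ℝ) * (x (k+4) 1 1 : ℝ) * ξ - (F : ℝ) +
          (-1)^k * (x (k+2) 1 1 : ℝ) * ξ| ≤ c / Xnorm x (k+2)) := by
  obtain ⟨hsym, hdet, c₁, c₂, c₃, hc₁, hc₂, hc₃, H⟩ := hx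
  -- golden ratio facts
  have h5 : Real.sqrt 5 ^ 2 = 5 := Real.sq_sqrt (by norm_num)
  have hs5 : 1 ≤ Real.sqrt 5 := by nlinarith [Real.sqrt_nonneg 5]
  have hgdef : gold = (1 + Real.sqrt 5)/2 := rfl
  have hgold1 : 1 ≤ gold := by rw [hgdef]; linarith
  have hgoldm : gold * (gold - 1) = 1 := by rw [hgdef]; linear_combination (1/4) * h5
  set ρ : ℝ := min 1 (c₁ * c₁^(gold - 1)) with hρdef
  have hρ : 0 < ρ := lt_min one_pos (mul_pos hc₁ (Real.rpow_pos_of_pos hc₁ _))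
  have hρ1 : ρ ≤ 1 := min_le_left _ _
  have hXuno : ∀ j, 1 ≤ j → (1:ℝ) ≤ Xnorm x j :=
    fun j hj => Xnorm_ge_one x j (hdet j hj) (hsym j hj)
  have hgrow : ∀ j, 1 ≤ j → ρ * (Xnorm x j * Xnorm x (j+1)) ≤ Xnorm x (j+2) := by
    intro j hj
    have h1 := (H j hj).1.1
    have h2 := (H (j+1) (by omega)).1.1
    have hXj : 1 ≤ Xnorm x j := hXuno j hj
    have hXj1 : 1 ≤ Xnorm x (j+1) := hXuno (j+1) (by omega)
    have hXjpos : (0:ℝ) < Xnorm x j := by linarith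
    have hXj1pos : (0:ℝ) < Xnorm x (j+1) := by linarith
    have hsplit : Xnorm x (j+1) ^ gold = Xnorm x (j+1) ^ (1:ℝ) * Xnorm x (j+1) ^ (gold - 1) := by
      rw [← Real.rpow_add hXj1pos]
      congr 1
      ring
    rw [Real.rpow_one] at hsplit
    have hlow : c₁^(gold - 1) * Xnorm x j ≤ Xnorm x (j+1) ^ (gold - 1) := by
      have h3 : (c₁ * Xnorm x j ^ gold)^(gold - 1) ≤ Xnorm x (j+1)^(gold - 1) :=
        Real.rpow_le_rpow (by positivity) h1 (by linarith)
      rw [Real.mul_rpow hc₁.le (by positivity), ← Real.rpow_mul hXjpos.le, hgoldm,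
        Real.rpow_one] at h3
      exact h3
    calc ρ * (Xnorm x j * Xnorm x (j+1))
        ≤ (c₁ * c₁^(gold - 1)) * (Xnorm x j * Xnorm x (j+1)) := by
          apply mul_le_mul_of_nonneg_right (min_le_right _ _)
          positivity
      _ = (c₁ * Xnorm x (j+1)) * (c₁^(gold - 1) * Xnorm x j) := by ring
      _ ≤ (c₁ * Xnorm x (j+1)) * (Xnorm x (j+1)^(gold - 1)) := by
          apply mul_le_mul_of_nonneg_left hlow
          positivity
      _ = c₁ * (Xnorm x (j+1) * Xnorm x (j+1)^(gold - 1)) := by ring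
      _ = c₁ * Xnorm x (j+1)^gold := by rw [hsplit]
      _ ≤ Xnorm x (j+2) := h2
  refine ⟨200*c₃/ρ^2, div_pos (by linarith) (pow_pos hρ 2), ?_⟩
  intro k hk
  obtain ⟨m, rfl⟩ : ∃ m, k = m + 2 := ⟨k - 2, by omega⟩
  simp only [show m+2-1 = m+1 from rfl, show m+2+1 = m+3 from rfl,
    show m+2+2 = m+4 from rfl, show m+2+4 = m+6 from rfl]
  have hpow1 : ((-1:ℝ))^(m+1) = -(-1:ℝ)^m := by rw [pow_succ]; ring
  have hpow2 : ((-1:ℝ))^(m+2) = (-1:ℝ)^m := by rw [pow_succ, pow_succ]; ring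
  have hpow3 : ((-1:ℝ))^(m+3) = -(-1:ℝ)^m := by rw [pow_succ, hpow2]; ring
  have hpow4 : ((-1:ℝ))^(m+4) = (-1:ℝ)^m := by rw [pow_succ, hpow3]; ring
  simp only [hpow2]
  have he : ((-1:ℝ)^m)^2 = 1 := by rw [← pow_mul, mul_comm, pow_mul, neg_one_sq, one_pow]
  have habs : |(-1:ℝ)^m| = 1 := by rw [abs_pow, abs_neg, abs_one, one_pow]
  -- symmetry casts
  have hsymR : ∀ j, 1 ≤ j → ((x j 1 0 : ℤ):ℝ) = ((x j 0 1 : ℤ):ℝ) := by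
    intro j hj
    exact_mod_cast congrArg (fun z : ℤ => (z:ℝ)) (hsym j hj).symm
  -- determinants in real form
  have hdetR : ∀ j, 1 ≤ j →
      ((x j 0 0 : ℤ):ℝ)*((x j 1 1 : ℤ):ℝ) - ((x j 0 1 : ℤ):ℝ)^2 = 1 := by
    intro j hj
    have hd := hdet j hj
    rw [Matrix.det_fin_two, ← hsym j hj] at hd
    have hd' : ((x j 0 0 : ℤ):ℝ)*((x j 1 1 : ℤ):ℝ)
        - ((x j 0 1 : ℤ):ℝ)*((x j 0 1 : ℤ):ℝ) = 1 := by exact_mod_cast hd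
    linear_combination hd'
  -- recursion hypotheses
  have hrec1 : x (m+3) = x (m+1) * Mmat (m+1) * x (m+2) := (H (m+1) (by omega)).2.2.1.2
  have hrec2 : x (m+4) = x (m+2) * Mmat (m+2) * x (m+3) := (H (m+2) (by omega)).2.2.1.2
  have hrec3 : x (m+5) = x (m+3) * Mmat (m+3) * x (m+4) := (H (m+3) (by omega)).2.2.1.2
  have hrec4 : x (m+6) = x (m+4) * Mmat (m+4) * x (m+5) := (H (m+4) (by omega)).2.2.1.2
  -- entry equations
  have t1_00 := rec_entriesR x (m+1) hrec1 0 0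
  have t1_01 := rec_entriesR x (m+1) hrec1 0 1
  have t1_10 := rec_entriesR x (m+1) hrec1 1 0
  have t1_11 := rec_entriesR x (m+1) hrec1 1 1
  simp only [hpow1, hsymR (m+1) (by omega), hsymR (m+2) (by omega),
    hsymR (m+3) (by omega)] at t1_00 t1_01 t1_10 t1_11
  have t2_00 := rec_entriesR x (m+2) hrec2 0 0
  have t2_01 := rec_entriesR x (m+2) hrec2 0 1
  have t2_10 := rec_entriesR x (m+2) hrec2 1 0
  have t2_11 := rec_entriesR x (m+2) hrec2 1 1
  simp only [hpow2, hsymR (m+2) (by omega), hsymR (m+3) (by omega),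
    hsymR (m+4) (by omega)] at t2_00 t2_01 t2_10 t2_11
  have t3_00 := rec_entriesR x (m+3) hrec3 0 0
  have t3_01 := rec_entriesR x (m+3) hrec3 0 1
  have t3_10 := rec_entriesR x (m+3) hrec3 1 0
  have t3_11 := rec_entriesR x (m+3) hrec3 1 1
  simp only [hpow3, hsymR (m+3) (by omega), hsymR (m+4) (by omega),
    hsymR (m+5) (by omega)] at t3_00 t3_01 t3_10 t3_11
  have t4_00 := rec_entriesR x (m+4) hrec4 0 0
  have t4_01 := rec_entriesR x (m+4) hrec4 0 1
  have t4_10 := rec_entriesR x (m+4) hrec4 1 0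
  have t4_11 := rec_entriesR x (m+4) hrec4 1 1
  simp only [hpow4, hsymR (m+4) (by omega), hsymR (m+5) (by omega),
    hsymR (m+6) (by omega)] at t4_00 t4_01 t4_10 t4_11
  obtain ⟨B1, B2, B3, B4, B5, B6⟩ := stmt6_core ξ ((-1:ℝ)^m) c₃ ρ
    (Xnorm x (m+1)) (Xnorm x (m+2)) (Xnorm x (m+3)) (Xnorm x (m+4)) (Xnorm x (m+5)) (Xnorm x (m+6))
    ((x (m+1) 0 0 : ℤ):ℝ) ((x (m+1) 0 1 : ℤ):ℝ) ((x (m+1) 1 1 : ℤ):ℝ)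
    ((x (m+2) 0 0 : ℤ):ℝ) ((x (m+2) 0 1 : ℤ):ℝ) ((x (m+2) 1 1 : ℤ):ℝ)
    ((x (m+3) 0 0 : ℤ):ℝ) ((x (m+3) 0 1 : ℤ):ℝ) ((x (m+3) 1 1 : ℤ):ℝ)
    ((x (m+4) 0 0 : ℤ):ℝ) ((x (m+4) 0 1 : ℤ):ℝ) ((x (m+4) 1 1 : ℤ):ℝ)
    ((x (m+5) 0 0 : ℤ):ℝ) ((x (m+5) 0 1 : ℤ):ℝ) ((x (m+5) 1 1 : ℤ):ℝ)
    ((x (m+6) 0 0 : ℤ):ℝ) ((x (m+6) 0 1 : ℤ):ℝ) ((x (m+6) 1 1 : ℤ):ℝ)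
    he habs hc₃ hρ hρ1
    (hXuno (m+1) (by omega)) (hXuno (m+2) (by omega)) (hXuno (m+3) (by omega))
    (hXuno (m+4) (by omega)) (hXuno (m+5) (by omega)) (hXuno (m+6) (by omega))
    (le_max_left _ _) ((le_max_left _ _).trans (le_max_right _ _))
    ((le_max_right _ _).trans (le_max_right _ _))
    (le_max_left _ _) ((le_max_left _ _).trans (le_max_right _ _))
    ((le_max_right _ _).trans (le_max_right _ _))
    (le_max_left _ _) ((le_max_left _ _).trans (le_max_right _ _))
    ((le_max_right _ _).trans (le_max_right _ _))
    ((H (m+3) (by omega)).2.1.1) ((H (m+3) (by omega)).2.1.2)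
    ((H (m+4) (by omega)).2.1.1) ((H (m+4) (by omega)).2.1.2)
    ((H (m+5) (by omega)).2.1.1) ((H (m+5) (by omega)).2.1.2)
    ((H (m+6) (by omega)).2.1.1) ((H (m+6) (by omega)).2.1.2)
    (hgrow (m+1) (by omega)) (hgrow (m+2) (by omega))
    (hgrow (m+3) (by omega)) (hgrow (m+4) (by omega))
    (hdetR (m+2) (by omega)) (hdetR (m+3) (by omega)) (hdetR (m+4) (by omega))
    t1_00 t1_01 t1_10 t1_11 t2_00 t2_01 t2_10 t2_11
    t3_00 t3_01 t3_10 t3_11 t4_00 t4_01 t4_10 t4_11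
  refine ⟨B1, B2, B3, B4, ?_, ?_⟩
  · refine ⟨(-1:ℤ)^m*(x (m+3) 0 0*(x (m+4) 1 1*x (m+6) 1 1) - 3*(x (m+3) 0 0*x (m+5) 1 1)
      - x (m+3) 0 1*(x (m+4) 0 1*x (m+6) 1 1)) - (-1:ℤ)^m*x (m+4) 1 1, ?_⟩
    have hcast : (((-1:ℤ)^m*(x (m+3) 0 0*(x (m+4) 1 1*x (m+6) 1 1) - 3*(x (m+3) 0 0*x (m+5) 1 1)
        - x (m+3) 0 1*(x (m+4) 0 1*x (m+6) 1 1)) - (-1:ℤ)^m*x (m+4) 1 1 : ℤ) : ℝ)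
        = (-1:ℝ)^m*(((x (m+3) 0 0 : ℤ):ℝ)*(((x (m+4) 1 1 : ℤ):ℝ)*((x (m+6) 1 1 : ℤ):ℝ))
            - 3*(((x (m+3) 0 0 : ℤ):ℝ)*((x (m+5) 1 1 : ℤ):ℝ))
            - ((x (m+3) 0 1 : ℤ):ℝ)*(((x (m+4) 0 1 : ℤ):ℝ)*((x (m+6) 1 1 : ℤ):ℝ)))
          - (-1:ℝ)^m*((x (m+4) 1 1 : ℤ):ℝ) := by
      push_cast
      ring
    rw [hcast]
    exact B5
  · refine ⟨(-((-1:ℤ)^m*x (m+3) 1 1) - 3*x (m+3) 0 1)*(x (m+4) 0 1*x (m+6) 1 1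
      - (-1:ℤ)^m*x (m+5) 1 1) + ((-1:ℤ)^m*x (m+3) 0 1 + 3*x (m+3) 0 0)*(x (m+4) 1 1*x (m+6) 1 1
      - 3*x (m+5) 1 1) - x (m+3) 1 1*x (m+5) 1 1 - 3*(-1:ℤ)^m*(x (m+3) 0 1*x (m+5) 1 1), ?_⟩
    have hcast : ((((-((-1:ℤ)^m*x (m+3) 1 1) - 3*x (m+3) 0 1)*(x (m+4) 0 1*x (m+6) 1 1
        - (-1:ℤ)^m*x (m+5) 1 1) + ((-1:ℤ)^m*x (m+3) 0 1 + 3*x (m+3) 0 0)*(x (m+4) 1 1*x (m+6) 1 1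
        - 3*x (m+5) 1 1) - x (m+3) 1 1*x (m+5) 1 1
        - 3*(-1:ℤ)^m*(x (m+3) 0 1*x (m+5) 1 1)) : ℤ) : ℝ)
        = (-((-1:ℝ)^m*((x (m+3) 1 1 : ℤ):ℝ)) - 3*((x (m+3) 0 1 : ℤ):ℝ))
            *(((x (m+4) 0 1 : ℤ):ℝ)*((x (m+6) 1 1 : ℤ):ℝ) - (-1:ℝ)^m*((x (m+5) 1 1 : ℤ):ℝ))
          + ((-1:ℝ)^m*((x (m+3) 0 1 : ℤ):ℝ) + 3*((x (m+3) 0 0 : ℤ):ℝ))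
            *(((x (m+4) 1 1 : ℤ):ℝ)*((x (m+6) 1 1 : ℤ):ℝ) - 3*((x (m+5) 1 1 : ℤ):ℝ))
          - ((x (m+3) 1 1 : ℤ):ℝ)*((x (m+5) 1 1 : ℤ):ℝ)
          - 3*(-1:ℝ)^m*(((x (m+3) 0 1 : ℤ):ℝ)*((x (m+5) 1 1 : ℤ):ℝ)) := by
      push_cast
      ring
    rw [hcast]
    exact B6
end

section
/- There exist constants c₄, c₅, c₆ > 0 such that for every integer k ≥ 2: (i) c₄·X_{k−1} ≤ ‖Q_k‖ ≤ c₅·X_{k−1} and c₄·X_{k−1} ≤ |Q_k'(ξ)| ≤ c₅·X_{k−1}; (ii) |Q_k(ξ)| ≤ c₆/X_{k+2}; (iii) the coefficient of T² in Q_k equals (−1)^{k−1}·x_{k−1,0}; (iv) the polynomials Q_{k−1}, Q_k, Q_{k+1} are linearly independent over ℚ; (v) x_{k−1,0}·Q_k(T) − x_{k,0}·Q_{k+1}(T) + x_{k+1,0}·Q_{k−1}(T) = −2·(−1)^k as polynomials in ℤ[T]. -/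
open Polynomial Filter

/-! ### Auxiliary lemmas -/

lemma gen_coeff (p q r : ℤ) (n : ℕ) :
    (Polynomial.C p - Polynomial.C q * Polynomial.X + Polynomial.C r * Polynomial.X ^ 2).coeff n
    = (if n = 0 then p else 0) - (if 1 = n then q else 0) + (if n = 2 then r else 0) := by
  simp only [coeff_add, coeff_sub, Polynomial.coeff_C_mul, Polynomial.coeff_C,
    Polynomial.coeff_X, Polynomial.coeff_X_pow, mul_ite, mul_one, mul_zero]

lemma Qpoly_coeff (x : ℕ → Matrix (Fin 2) (Fin 2) ℤ) (k : ℕ) (n : ℕ) :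
    (Qpoly x k).coeff n =
      (if n = 0 then x k 0 1 * x (k+1) 1 1 - x k 1 1 * x (k+1) 0 1 else 0)
      - (if 1 = n then x k 0 0 * x (k+1) 1 1 - x k 1 1 * x (k+1) 0 0 else 0)
      + (if n = 2 then x k 0 0 * x (k+1) 0 1 - x k 0 1 * x (k+1) 0 0 else 0) := by
  rw [Qpoly, gen_coeff]

def natmax (x : ℕ → Matrix (Fin 2) (Fin 2) ℤ) (k : ℕ) : ℕ :=
  max (x k 0 0).natAbs (max (x k 0 1).natAbs (x k 1 1).natAbs)

lemma Xnorm_eq_natmax (x : ℕ → Matrix (Fin 2) (Fin 2) ℤ) (k : ℕ) :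
    Xnorm x k = (natmax x k : ℝ) := by
  rw [Xnorm, natmax]
  push_cast [Nat.cast_natAbs]
  ring

lemma Xnorm_nonneg (x : ℕ → Matrix (Fin 2) (Fin 2) ℤ) (k : ℕ) : 0 ≤ Xnorm x k := by
  rw [Xnorm_eq_natmax]; positivity

lemma abs_entry_le_Xnorm (x : ℕ → Matrix (Fin 2) (Fin 2) ℤ) (k : ℕ) :
    |(x k 0 0 : ℝ)| ≤ Xnorm x k ∧ |(x k 0 1 : ℝ)| ≤ Xnorm x k ∧ |(x k 1 1 : ℝ)| ≤ Xnorm x k :=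
  ⟨le_max_left _ _, le_trans (le_max_left _ _) (le_max_right _ _),
    le_trans (le_max_right _ _) (le_max_right _ _)⟩

lemma a_ne_zero {ξ : ℝ} {x : ℕ → Matrix (Fin 2) (Fin 2) ℤ} (hx : MarkoffSeq ξ x) (k : ℕ)
    (hk : 1 ≤ k) : x k 0 0 ≠ 0 := by
  obtain ⟨hsym, hdet, c₁, c₂, c₃, hc₁, hc₂, hc₃, hall⟩ := hx
  intro h0
  have h4 := (hall k hk).2.2.2.2
  rw [h0] at h4
  simp at h4
  exact absurd h4 (not_lt.2 (Xnorm_nonneg x k))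

lemma one_le_Xnorm {ξ : ℝ} {x : ℕ → Matrix (Fin 2) (Fin 2) ℤ} (hx : MarkoffSeq ξ x) (k : ℕ)
    (hk : 1 ≤ k) : 1 ≤ Xnorm x k := by
  have h := a_ne_zero hx k hk
  have h1 : (1:ℝ) ≤ |(x k 0 0 : ℝ)| := by
    rw [← Int.cast_abs]
    exact_mod_cast Int.one_le_abs h
  exact le_trans h1 (abs_entry_le_Xnorm x k).1

lemma k_le_Xnorm {ξ : ℝ} {x : ℕ → Matrix (Fin 2) (Fin 2) ℤ} (hx : MarkoffSeq ξ x) (k : ℕ)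
    (hk : 1 ≤ k) : (k : ℝ) ≤ Xnorm x k := by
  induction k with
  | zero => omega
  | succ n ih =>
    rcases Nat.eq_or_lt_of_le hk with h | h
    · simpa [← h] using one_le_Xnorm hx (0+1) (by omega)
    · have hn : 1 ≤ n := by omega
      have ihn := ih hn
      have hmono : Xnorm x n < Xnorm x (n+1) := by
        obtain ⟨hsym, hdet, c₁, c₂, c₃, hc₁, hc₂, hc₃, hall⟩ := hx
        exact (hall n hn).2.2.2.1
      rw [Xnorm_eq_natmax x n, Xnorm_eq_natmax x (n+1)] at hmono
      rw [Xnorm_eq_natmax x n] at ihn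
      rw [Xnorm_eq_natmax x (n+1)]
      have : natmax x n < natmax x (n+1) := by exact_mod_cast hmono
      have : (natmax x n : ℝ) + 1 ≤ (natmax x (n+1) : ℝ) := by exact_mod_cast this
      push_cast
      linarith

lemma Xnorm_pos {ξ : ℝ} {x : ℕ → Matrix (Fin 2) (Fin 2) ℤ} (hx : MarkoffSeq ξ x) (k : ℕ)
    (hk : 1 ≤ k) : 0 < Xnorm x k := lt_of_lt_of_le one_pos (one_le_Xnorm hx k hk)

lemma xi_irrational {ξ : ℝ} {x : ℕ → Matrix (Fin 2) (Fin 2) ℤ} (hx : MarkoffSeq ξ x)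
    (p q : ℤ) (hq : q ≠ 0) : (q : ℝ) * ξ ≠ (p : ℝ) := by
  intro heq
  obtain ⟨hsym, hdet, c₁, c₂, c₃, hc₁, hc₂, hc₃, hall⟩ := hx
  have hx' : MarkoffSeq ξ x := ⟨hsym, hdet, c₁, c₂, c₃, hc₁, hc₂, hc₃, hall⟩
  obtain ⟨k, hk1, hkX⟩ : ∃ k, 1 ≤ k ∧ c₃ * |(q:ℝ)| < Xnorm x k := by
    refine ⟨⌈c₃ * |(q:ℝ)|⌉₊ + 1, by omega, ?_⟩
    have h1 := k_le_Xnorm hx' (⌈c₃ * |(q:ℝ)|⌉₊ + 1) (by omega)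
    have h2 : c₃ * |(q:ℝ)| < (⌈c₃ * |(q:ℝ)|⌉₊ + 1 : ℕ) := by
      push_cast
      exact lt_of_le_of_lt (Nat.le_ceil _) (by linarith [Nat.lt_succ_self ⌈c₃ * |(q:ℝ)|⌉₊])
    linarith
  have hXpos := Xnorm_pos hx' k hk1
  have hqR : (0:ℝ) < |(q:ℝ)| := by
    rw [← Int.cast_abs]
    exact_mod_cast abs_pos.2 hq
  have hb := (hall k hk1).2.1
  have key : ∀ u v : ℤ, |(u:ℝ) * ξ - v| ≤ c₃ / Xnorm x k → u * p - v * q = 0 := by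
    intro u v huv
    have h1 : |(u:ℝ) * ξ - v| < 1 / |(q:ℝ)| := by
      have : c₃ / Xnorm x k < 1 / |(q:ℝ)| := by
        rw [div_lt_div_iff₀ hXpos hqR]
        linarith
      linarith
    have h2 : (u:ℝ) * ξ - v = (u * p - v * q : ℤ) / (q : ℝ) := by
      have hq0 : (q:ℝ) ≠ 0 := Int.cast_ne_zero.2 hq
      field_simp
      push_cast
      linear_combination (u:ℝ) * heq
    have h4 : |((u * p - v * q : ℤ) : ℝ)| / |(q:ℝ)| < 1 / |(q:ℝ)| := by
      rw [← abs_div, ← h2]; exact h1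
    have h3 : |((u * p - v * q : ℤ) : ℝ)| < 1 := by
      have h5 := mul_lt_mul_of_pos_right h4 hqR
      rw [div_mul_cancel₀ _ (ne_of_gt hqR), div_mul_cancel₀ _ (ne_of_gt hqR)] at h5
      exact h5
    have h6 : |u * p - v * q| < 1 := by
      have : ((|u * p - v * q| : ℤ) : ℝ) < 1 := by rw [Int.cast_abs]; exact h3
      exact_mod_cast this
    rcases abs_lt.mp h6 with ⟨h7, h8⟩
    omega
  have e1 : x k 0 0 * p - x k 0 1 * q = 0 := key _ _ hb.1
  have e2 : x k 0 1 * p - x k 1 1 * q = 0 := key _ _ hb.2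
  have hdetk := hdet k hk1
  rw [Matrix.det_fin_two, (hsym k hk1).symm] at hdetk
  have : q^2 = 0 := by
    linear_combination (-(q^2))*hdetk + (x k 0 1 * q)*e1 - (x k 0 0 * q)*e2
  exact hq (sq_eq_zero_iff.mp this)

lemma closedForm {ξ : ℝ} {x : ℕ → Matrix (Fin 2) (Fin 2) ℤ} (hx : MarkoffSeq ξ x) (m : ℕ) :
    Qpoly x (m+2) =
      Polynomial.C (-(3 * x (m+1) 0 1 + (-1)^m * x (m+1) 1 1))
      - Polynomial.C (-(3 * x (m+1) 0 0 + 2 * (-1)^m * x (m+1) 0 1)) * Polynomial.X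
      + Polynomial.C (-((-1)^m * x (m+1) 0 0)) * Polynomial.X ^ 2 := by
  obtain ⟨hsym, hdet, c₁, c₂, c₃, hc₁, hc₂, hc₃, hall⟩ := hx
  have hrec : x (m+3) = x (m+2) * Mmat (m+2) * x (m+1) := by
    have := ((hall (m+1) (by omega)).2.2.1).1
    simpa [show m+1+2 = m+3 from rfl, show m+1+1 = m+2 from rfl] using this
  have hs1 : x (m+1) 1 0 = x (m+1) 0 1 := (hsym (m+1) (by omega)).symm
  have hs2 : x (m+2) 1 0 = x (m+2) 0 1 := (hsym (m+2) (by omega)).symm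
  have hpow2 : ((-1:ℤ))^(m+2) = (-1)^m := by rw [pow_add]; ring
  have hpow3 : ((-1:ℤ))^(m+3) = -(-1)^m := by rw [pow_add]; ring
  set a1 := x (m+1) 0 0 with ha1
  set b1 := x (m+1) 0 1 with hb1
  set c1 := x (m+1) 1 1 with hc1'
  set a2 := x (m+2) 0 0 with ha2
  set b2 := x (m+2) 0 1 with hb2
  set c2 := x (m+2) 1 1 with hc2'
  set e := ((-1:ℤ))^m with he
  have hd2 : a2 * c2 - b2 * b2 = 1 := by
    have h := hdet (m+2) (by omega)
    rw [Matrix.det_fin_two, hs2] at h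
    linear_combination h
  have hA : x (m+3) 0 0 = (3*a2 - e*b2) * a1 + e*a2*b1 := by
    rw [hrec]
    simp [Mmat, Matrix.mul_apply, Fin.sum_univ_two, hs1, hs2, hpow2, hpow3]
    ring
  have hB : x (m+3) 0 1 = (3*a2 - e*b2) * b1 + e*a2*c1 := by
    rw [hrec]
    simp [Mmat, Matrix.mul_apply, Fin.sum_univ_two, hs1, hs2, hpow2, hpow3]
    ring
  have hB2 : x (m+3) 1 0 = (3*b2 - e*c2) * a1 + e*b2*b1 := by
    rw [hrec]
    simp [Mmat, Matrix.mul_apply, Fin.sum_univ_two, hs1, hs2, hpow2, hpow3]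
    ring
  have hC : x (m+3) 1 1 = (3*b2 - e*c2) * b1 + e*b2*c1 := by
    rw [hrec]
    simp [Mmat, Matrix.mul_apply, Fin.sum_univ_two, hs1, hs2, hpow2, hpow3]
    ring
  have hsym3 : x (m+3) 0 1 = x (m+3) 1 0 := hsym (m+3) (by omega)
  have hR : 3*(a2*b1 - a1*b2) + e*(a2*c1 + a1*c2 - 2*b1*b2) = 0 := by
    linear_combination hB2 - hB + hsym3
  have t0 : b2 * x (m+3) 1 1 - c2 * x (m+3) 0 1 = -(3*b1 + e*c1) := by
    linear_combination b2*hC - c2*hB + (-c1*e - 3*b1)*hd2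
  have t1 : a2 * x (m+3) 1 1 - c2 * x (m+3) 0 0 = -(3*a1 + 2*e*b1) := by
    linear_combination a2*hC - c2*hA + (-2*b1*e - 3*a1)*hd2 + b2*hR
  have t2 : a2 * x (m+3) 0 1 - b2 * x (m+3) 0 0 = -(e*a1) := by
    linear_combination a2*hB - b2*hA + (-a1*e)*hd2 + a2*hR
  rw [Qpoly]
  rw [show m+2+1 = m+3 from rfl, t0, t1, t2]

lemma Qc0 {ξ : ℝ} {x : ℕ → Matrix (Fin 2) (Fin 2) ℤ} (hx : MarkoffSeq ξ x) (m : ℕ) :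
    (Qpoly x (m+2)).coeff 0 = -(3 * x (m+1) 0 1 + (-1)^m * x (m+1) 1 1) := by
  rw [closedForm hx m, gen_coeff]; norm_num

lemma Qc1 {ξ : ℝ} {x : ℕ → Matrix (Fin 2) (Fin 2) ℤ} (hx : MarkoffSeq ξ x) (m : ℕ) :
    (Qpoly x (m+2)).coeff 1 = 3 * x (m+1) 0 0 + 2 * (-1)^m * x (m+1) 0 1 := by
  rw [closedForm hx m, gen_coeff]; norm_num

lemma Qc2 {ξ : ℝ} {x : ℕ → Matrix (Fin 2) (Fin 2) ℤ} (hx : MarkoffSeq ξ x) (m : ℕ) :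
    (Qpoly x (m+2)).coeff 2 = -((-1)^m * x (m+1) 0 0) := by
  rw [closedForm hx m, gen_coeff]; norm_num

lemma aeval_Qpoly (ξ : ℝ) (x : ℕ → Matrix (Fin 2) (Fin 2) ℤ) (k : ℕ) :
    Polynomial.aeval ξ (Qpoly x k)
      = ((x k 0 1 : ℝ) - (x k 0 0 : ℝ)*ξ) * ((x (k+1) 1 1 : ℝ) - (x (k+1) 0 1 : ℝ)*ξ)
        - ((x k 1 1 : ℝ) - (x k 0 1 : ℝ)*ξ) * ((x (k+1) 0 1 : ℝ) - (x (k+1) 0 0 : ℝ)*ξ) := by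
  simp [Qpoly]
  push_cast
  ring

lemma gen_deriv (p q r : ℤ) :
    Polynomial.derivative (Polynomial.C p - Polynomial.C q * Polynomial.X + Polynomial.C r * Polynomial.X^2)
      = Polynomial.C (-q) + Polynomial.C (2*r) * Polynomial.X := by
  simp [derivative_sub, derivative_add, derivative_C_mul, Polynomial.derivative_X_pow]
  ring

lemma aeval_deriv {ξ : ℝ} {x : ℕ → Matrix (Fin 2) (Fin 2) ℤ} (hx : MarkoffSeq ξ x) (m : ℕ) :
    Polynomial.aeval ξ (Polynomial.derivative (Qpoly x (m+2)))
      = 3*(x (m+1) 0 0 : ℝ) + 2*(-1:ℝ)^m*(x (m+1) 0 1 : ℝ)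
        - 2*(-1:ℝ)^m*(x (m+1) 0 0 : ℝ)*ξ := by
  rw [closedForm hx m, gen_deriv]
  simp [map_ofNat]
  push_cast
  ring

lemma combo_eq (α β γ p1 q1 r1 p2 q2 r2 p3 q3 r3 s : ℤ)
    (h0 : α*p1 - β*p2 + γ*p3 = s) (h1 : α*q1 - β*q2 + γ*q3 = 0)
    (h2 : α*r1 - β*r2 + γ*r3 = 0) :
    Polynomial.C α * (Polynomial.C p1 - Polynomial.C q1 * Polynomial.X + Polynomial.C r1 * Polynomial.X^2)
    - Polynomial.C β * (Polynomial.C p2 - Polynomial.C q2 * Polynomial.X + Polynomial.C r2 * Polynomial.X^2)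
    + Polynomial.C γ * (Polynomial.C p3 - Polynomial.C q3 * Polynomial.X + Polynomial.C r3 * Polynomial.X^2)
    = Polynomial.C s := by
  have H0 := congrArg (Polynomial.C (R := ℤ)) h0
  have H1 := congrArg (Polynomial.C (R := ℤ)) h1
  have H2 := congrArg (Polynomial.C (R := ℤ)) h2
  simp only [map_add, map_sub, map_mul, map_zero] at H0 H1 H2
  linear_combination H0 - Polynomial.X * H1 + Polynomial.X^2 * H2

lemma coeff_natAbs_le_polyNorm (P : Polynomial ℤ) (n : ℕ) :
    (P.coeff n).natAbs ≤ polyNorm P := by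
  by_cases h : P.coeff n = 0
  · simp [h]
  · exact Finset.le_sup (f := fun i => (P.coeff i).natAbs) (mem_support_iff.2 h)

lemma gold_facts : 1 ≤ gold ∧ gold * (gold - 1) = 1 := by
  have h5 : Real.sqrt 5 ^ 2 = 5 := Real.sq_sqrt (by norm_num)
  have hs : 1 ≤ Real.sqrt 5 := by nlinarith [Real.sqrt_nonneg 5]
  constructor
  · rw [gold]; linarith
  · rw [gold]; nlinarith

set_option maxHeartbeats 2000000 in
theorem stmt10 (ξ : ℝ) (x : ℕ → Matrix (Fin 2) (Fin 2) ℤ) (hx : MarkoffSeq ξ x) :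
    ∃ c₄ c₅ c₆ : ℝ, 0 < c₄ ∧ 0 < c₅ ∧ 0 < c₆ ∧ ∀ k, 2 ≤ k →
      (c₄ * Xnorm x (k-1) ≤ (polyNorm (Qpoly x k) : ℝ) ∧
        (polyNorm (Qpoly x k) : ℝ) ≤ c₅ * Xnorm x (k-1)) ∧
      (c₄ * Xnorm x (k-1) ≤ |Polynomial.aeval ξ (Polynomial.derivative (Qpoly x k))| ∧
        |Polynomial.aeval ξ (Polynomial.derivative (Qpoly x k))| ≤ c₅ * Xnorm x (k-1)) ∧
      |Polynomial.aeval ξ (Qpoly x k)| ≤ c₆ / Xnorm x (k+2) ∧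
      (Qpoly x k).coeff 2 = (-1)^(k-1) * x (k-1) 0 0 ∧
      LinearIndependent ℚ
        ![(Qpoly x (k-1)).map (Int.castRingHom ℚ),
          (Qpoly x k).map (Int.castRingHom ℚ),
          (Qpoly x (k+1)).map (Int.castRingHom ℚ)] ∧
      Polynomial.C (x (k-1) 0 0) * Qpoly x k - Polynomial.C (x k 0 0) * Qpoly x (k+1) +
        Polynomial.C (x (k+1) 0 0) * Qpoly x (k-1) = Polynomial.C (-2 * (-1)^k : ℤ) := by
  obtain ⟨hsym, hdet, cc1, cc2, cc3, hcc1, hcc2, hcc3, hall⟩ := hx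
  have hx' : MarkoffSeq ξ x := ⟨hsym, hdet, cc1, cc2, cc3, hcc1, hcc2, hcc3, hall⟩
  have hBpos : (0:ℝ) < 1 + ξ^2 := by positivity
  have hDne : ∀ m : ℕ, Polynomial.aeval ξ (Polynomial.derivative (Qpoly x (m+2))) ≠ 0 := by
    intro m h0
    rw [aeval_deriv hx' m] at h0
    have ha0 := a_ne_zero hx' (m+1) (by omega)
    have hq0 : (2*(-1:ℤ)^m*(x (m+1) 0 0)) ≠ 0 := by
      intro hqq
      rcases mul_eq_zero.mp hqq with h | h
      · rcases mul_eq_zero.mp h with h' | h'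
        · norm_num at h'
        · exact pow_ne_zero m (by norm_num : (-1:ℤ) ≠ 0) h'
      · exact ha0 h
    exact xi_irrational hx' (3*(x (m+1) 0 0) + 2*(-1:ℤ)^m*(x (m+1) 0 1))
      (2*(-1:ℤ)^m*(x (m+1) 0 0)) hq0 (by push_cast; linear_combination -h0)
  classical
  set K : ℕ := ⌈2*cc3*(1+ξ^2)⌉₊ + 2 with hKdef
  set s : Finset ℝ := insert (1/(1+ξ^2)) ((Finset.Icc 2 K).image
      (fun k => |Polynomial.aeval ξ (Polynomial.derivative (Qpoly x k))| / Xnorm x (k-1)))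
      with hsdef
  have hsne : s.Nonempty := ⟨1/(1+ξ^2), Finset.mem_insert_self _ _⟩
  have hc4le : s.min' hsne ≤ 1/(1+ξ^2) := Finset.min'_le _ _ (Finset.mem_insert_self _ _)
  have hc4pos : 0 < s.min' hsne := by
    have hmem := s.min'_mem hsne
    rcases Finset.mem_insert.mp hmem with h | h
    · rw [h]; positivity
    · obtain ⟨k, hkI, hkeq⟩ := Finset.mem_image.mp h
      have hk2 : 2 ≤ k := (Finset.mem_Icc.mp hkI).1
      obtain ⟨m, rfl⟩ : ∃ m, k = m+2 := ⟨k-2, by omega⟩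
      rw [← hkeq]
      exact div_pos (abs_pos.mpr (hDne m)) (Xnorm_pos hx' (m+2-1) (by omega))
  refine ⟨s.min' hsne, 5 + 2*|ξ|, 2*cc3^2*(cc2*cc2^(gold-1)), hc4pos,
    by positivity, ?_, ?_⟩
  · have := Real.rpow_pos_of_pos hcc2 (gold - 1)
    positivity
  intro k hk
  obtain ⟨m, rfl⟩ : ∃ m, k = m+2 := ⟨k-2, by omega⟩
  simp only [show m+2-1 = m+1 from rfl, show m+2+1 = m+3 from rfl, show m+2+2 = m+4 from rfl]
  -- basic facts
  have hX1pos : 0 < Xnorm x (m+1) := Xnorm_pos hx' (m+1) (by omega)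
  have hX1one : 1 ≤ Xnorm x (m+1) := one_le_Xnorm hx' (m+1) (by omega)
  have hX1nn : 0 ≤ Xnorm x (m+1) := le_of_lt hX1pos
  have h4 := (hall (m+1) (by omega)).2.2.2.2
  have hlin1 := (hall (m+1) (by omega)).2.1.1
  have hE1 : |(-1:ℝ)^m| = 1 := by rw [abs_pow, abs_neg, abs_one, one_pow]
  have hDeqL := aeval_deriv hx' m
  -- structural relations
  have hrec : x (m+3) = x (m+2) * Mmat (m+2) * x (m+1) := by
    have := ((hall (m+1) (by omega)).2.2.1).1
    simpa [show m+1+2 = m+3 from rfl, show m+1+1 = m+2 from rfl] using this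
  have hs1 : x (m+1) 1 0 = x (m+1) 0 1 := (hsym (m+1) (by omega)).symm
  have hs2 : x (m+2) 1 0 = x (m+2) 0 1 := (hsym (m+2) (by omega)).symm
  have hpow2 : ((-1:ℤ))^(m+2) = (-1)^m := by rw [pow_add]; ring
  have hpow3 : ((-1:ℤ))^(m+3) = -(-1)^m := by rw [pow_add]; ring
  have hd1 : x (m+1) 0 0 * x (m+1) 1 1 - x (m+1) 0 1 * x (m+1) 0 1 = 1 := by
    have h := hdet (m+1) (by omega)
    rw [Matrix.det_fin_two, hs1] at h
    linear_combination h
  have hd2 : x (m+2) 0 0 * x (m+2) 1 1 - x (m+2) 0 1 * x (m+2) 0 1 = 1 := by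
    have h := hdet (m+2) (by omega)
    rw [Matrix.det_fin_two, hs2] at h
    linear_combination h
  have hA : x (m+3) 0 0 = (3*x (m+2) 0 0 - (-1)^m*x (m+2) 0 1) * x (m+1) 0 0
      + (-1)^m*x (m+2) 0 0*x (m+1) 0 1 := by
    rw [hrec]
    simp [Mmat, Matrix.mul_apply, Fin.sum_univ_two, hs1, hs2, hpow2, hpow3]
    ring
  have hB : x (m+3) 0 1 = (3*x (m+2) 0 0 - (-1)^m*x (m+2) 0 1) * x (m+1) 0 1
      + (-1)^m*x (m+2) 0 0*x (m+1) 1 1 := by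
    rw [hrec]
    simp [Mmat, Matrix.mul_apply, Fin.sum_univ_two, hs1, hs2, hpow2, hpow3]
    ring
  have hB2 : x (m+3) 1 0 = (3*x (m+2) 0 1 - (-1)^m*x (m+2) 1 1) * x (m+1) 0 0
      + (-1)^m*x (m+2) 0 1*x (m+1) 0 1 := by
    rw [hrec]
    simp [Mmat, Matrix.mul_apply, Fin.sum_univ_two, hs1, hs2, hpow2, hpow3]
    ring
  have hsym3 : x (m+3) 0 1 = x (m+3) 1 0 := hsym (m+3) (by omega)
  have hR : 3*(x (m+2) 0 0*x (m+1) 0 1 - x (m+1) 0 0*x (m+2) 0 1)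
      + (-1:ℤ)^m*(x (m+2) 0 0*x (m+1) 1 1 + x (m+1) 0 0*x (m+2) 1 1
        - 2*x (m+1) 0 1*x (m+2) 0 1) = 0 := by
    linear_combination hB2 - hB + hsym3
  refine ⟨⟨?_, ?_⟩, ⟨?_, ?_⟩, ?_, ?_, ?_, ?_⟩
  -- (1a) lower bound for polyNorm
  · have h1 : ((Qpoly x (m+2)).coeff 2).natAbs = (x (m+1) 0 0).natAbs := by
      rw [Qc2 hx' m]
      rcases neg_one_pow_eq_or ℤ m with h | h <;> rw [h] <;> omega
    have h2 : (x (m+1) 0 0).natAbs ≤ polyNorm (Qpoly x (m+2)) := by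
      rw [← h1]; exact coeff_natAbs_le_polyNorm _ 2
    have h3 : |(x (m+1) 0 0 : ℝ)| ≤ (polyNorm (Qpoly x (m+2)) : ℝ) := by
      have h3' : |x (m+1) 0 0| ≤ (polyNorm (Qpoly x (m+2)) : ℤ) := by
        rw [Int.abs_eq_natAbs]; exact_mod_cast h2
      exact_mod_cast h3'
    calc s.min' hsne * Xnorm x (m+1) ≤ (1/(1+ξ^2)) * Xnorm x (m+1) :=
          mul_le_mul_of_nonneg_right hc4le hX1nn
      _ ≤ (1/(1+ξ^2)) * ((1+ξ^2) * |(x (m+1) 0 0 : ℝ)|) :=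
          mul_le_mul_of_nonneg_left (le_of_lt h4) (by positivity)
      _ = |(x (m+1) 0 0 : ℝ)| := by field_simp
      _ ≤ _ := h3
  -- (1b) upper bound for polyNorm
  · have hup : polyNorm (Qpoly x (m+2)) ≤ 5 * natmax x (m+1) := by
      apply Finset.sup_le
      intro i hi
      have hne := Polynomial.mem_support_iff.mp hi
      have haN : (x (m+1) 0 0).natAbs ≤ natmax x (m+1) := le_max_left _ _
      have hbN : (x (m+1) 0 1).natAbs ≤ natmax x (m+1) :=
        le_trans (le_max_left _ _) (le_max_right _ _)
      have hcN : (x (m+1) 1 1).natAbs ≤ natmax x (m+1) :=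
        le_trans (le_max_right _ _) (le_max_right _ _)
      rcases i with _ | _ | _ | n
      · rw [Qc0 hx' m]
        rcases neg_one_pow_eq_or ℤ m with h | h <;> rw [h] <;> omega
      · rw [Qc1 hx' m]
        rcases neg_one_pow_eq_or ℤ m with h | h <;> rw [h] <;> omega
      · rw [Qc2 hx' m]
        rcases neg_one_pow_eq_or ℤ m with h | h <;> rw [h] <;> omega
      · exfalso
        apply hne
        rw [Qpoly_coeff]
        simp only [if_neg (show ¬(n+3 = 0) by omega), if_neg (show ¬(1 = n+3) by omega),
          if_neg (show ¬(n+3 = 2) by omega)]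
        ring
    calc ((polyNorm (Qpoly x (m+2)) : ℕ) : ℝ) ≤ ((5 * natmax x (m+1) : ℕ) : ℝ) := by
          exact_mod_cast hup
      _ = 5 * Xnorm x (m+1) := by rw [Xnorm_eq_natmax]; push_cast; ring
      _ ≤ (5 + 2*|ξ|) * Xnorm x (m+1) := by nlinarith [abs_nonneg ξ]
  -- (2a) lower bound for derivative
  · have hDlow : 3*|(x (m+1) 0 0 : ℝ)| - 2*(cc3 / Xnorm x (m+1))
        ≤ |Polynomial.aeval ξ (Polynomial.derivative (Qpoly x (m+2)))| := by
      rw [hDeqL, show 3*((x (m+1) 0 0 : ℤ):ℝ) + 2*(-1:ℝ)^m*((x (m+1) 0 1 : ℤ):ℝ)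
          - 2*(-1:ℝ)^m*((x (m+1) 0 0 : ℤ):ℝ)*ξ
        = 3*((x (m+1) 0 0 : ℤ):ℝ)
          - 2*(-1:ℝ)^m*(((x (m+1) 0 0 : ℤ):ℝ)*ξ - ((x (m+1) 0 1 : ℤ):ℝ)) from by ring]
      have h1 := abs_sub_abs_le_abs_sub (3*((x (m+1) 0 0 : ℤ):ℝ))
        (2*(-1:ℝ)^m*(((x (m+1) 0 0 : ℤ):ℝ)*ξ - ((x (m+1) 0 1 : ℤ):ℝ)))
      have h2 : |3*((x (m+1) 0 0 : ℤ):ℝ)| = 3*|((x (m+1) 0 0 : ℤ):ℝ)| := by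
        rw [abs_mul]; norm_num
      have h3 : |2*(-1:ℝ)^m*(((x (m+1) 0 0 : ℤ):ℝ)*ξ - ((x (m+1) 0 1 : ℤ):ℝ))|
          = 2*|((x (m+1) 0 0 : ℤ):ℝ)*ξ - ((x (m+1) 0 1 : ℤ):ℝ)| := by
        rw [abs_mul, abs_mul, hE1]; norm_num
      rw [h2, h3] at h1
      linarith
    by_cases hcase : m+2 ≤ K
    · have hmem : |Polynomial.aeval ξ (Polynomial.derivative (Qpoly x (m+2)))|
          / Xnorm x (m+2-1) ∈ s := by
        rw [hsdef]
        exact Finset.mem_insert_of_mem (Finset.mem_image_of_mem _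
          (Finset.mem_Icc.mpr ⟨by omega, hcase⟩))
      have h9 : s.min' hsne ≤ |Polynomial.aeval ξ (Polynomial.derivative (Qpoly x (m+2)))|
          / Xnorm x (m+1) := Finset.min'_le s _ hmem
      exact (le_div_iff₀ hX1pos).mp h9
    · push_neg at hcase
      have hXc : 2*cc3*(1+ξ^2) ≤ Xnorm x (m+1) := by
        have h5 := k_le_Xnorm hx' (m+1) (by omega)
        have hKm : (K:ℝ) ≤ ((m+1 : ℕ):ℝ) := Nat.cast_le.mpr (by omega)
        have h6 : 2*cc3*(1+ξ^2) ≤ (K:ℝ) := by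
          rw [hKdef]
          push_cast
          linarith [Nat.le_ceil (2*cc3*(1+ξ^2))]
        linarith
      have h2c : 2*(cc3 / Xnorm x (m+1)) ≤ Xnorm x (m+1) / (1+ξ^2) := by
        rw [show 2*(cc3 / Xnorm x (m+1)) = (2*cc3) / Xnorm x (m+1) from by ring,
          div_le_div_iff₀ hX1pos hBpos]
        nlinarith [hXc, hX1one]
      have hX1a : Xnorm x (m+1) / (1+ξ^2) ≤ |(x (m+1) 0 0 : ℝ)| := by
        rw [div_le_iff₀ hBpos]
        nlinarith [h4]
      have hfin : (1/(1+ξ^2)) * Xnorm x (m+1) = Xnorm x (m+1) / (1+ξ^2) := by ring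
      have := mul_le_mul_of_nonneg_right hc4le hX1nn
      linarith [div_nonneg hX1nn (le_of_lt hBpos)]
  -- (2b) upper bound for derivative
  · rw [hDeqL]
    have ha1X := (abs_entry_le_Xnorm x (m+1)).1
    have hb1X := (abs_entry_le_Xnorm x (m+1)).2.1
    have h1 : |3*((x (m+1) 0 0 : ℤ):ℝ) + 2*(-1:ℝ)^m*((x (m+1) 0 1 : ℤ):ℝ)
        - 2*(-1:ℝ)^m*((x (m+1) 0 0 : ℤ):ℝ)*ξ|
        ≤ |3*((x (m+1) 0 0 : ℤ):ℝ)| + |2*(-1:ℝ)^m*((x (m+1) 0 1 : ℤ):ℝ)|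
          + |2*(-1:ℝ)^m*((x (m+1) 0 0 : ℤ):ℝ)*ξ| := by
      apply abs_le.mpr
      constructor
      · linarith [neg_abs_le (3*((x (m+1) 0 0 : ℤ):ℝ)),
          neg_abs_le (2*(-1:ℝ)^m*((x (m+1) 0 1 : ℤ):ℝ)),
          le_abs_self (2*(-1:ℝ)^m*((x (m+1) 0 0 : ℤ):ℝ)*ξ)]
      · linarith [le_abs_self (3*((x (m+1) 0 0 : ℤ):ℝ)),
          le_abs_self (2*(-1:ℝ)^m*((x (m+1) 0 1 : ℤ):ℝ)),
          neg_abs_le (2*(-1:ℝ)^m*((x (m+1) 0 0 : ℤ):ℝ)*ξ)]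
    have h2 : |3*((x (m+1) 0 0 : ℤ):ℝ)| = 3*|((x (m+1) 0 0 : ℤ):ℝ)| := by
      rw [abs_mul]; norm_num
    have h3 : |2*(-1:ℝ)^m*((x (m+1) 0 1 : ℤ):ℝ)| = 2*|((x (m+1) 0 1 : ℤ):ℝ)| := by
      rw [abs_mul, abs_mul, hE1]; norm_num
    have h4' : |2*(-1:ℝ)^m*((x (m+1) 0 0 : ℤ):ℝ)*ξ| = 2*|((x (m+1) 0 0 : ℤ):ℝ)| * |ξ| := by
      rw [abs_mul, abs_mul, abs_mul, hE1]; norm_num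
    rw [h2, h3, h4'] at h1
    have h5 : 2*|((x (m+1) 0 0 : ℤ):ℝ)| * |ξ| ≤ 2*Xnorm x (m+1)*|ξ| := by
      have := mul_le_mul_of_nonneg_right ha1X (abs_nonneg ξ)
      nlinarith [abs_nonneg ξ]
    calc |3*((x (m+1) 0 0 : ℤ):ℝ) + 2*(-1:ℝ)^m*((x (m+1) 0 1 : ℤ):ℝ)
        - 2*(-1:ℝ)^m*((x (m+1) 0 0 : ℤ):ℝ)*ξ|
        ≤ 3*|((x (m+1) 0 0 : ℤ):ℝ)| + 2*|((x (m+1) 0 1 : ℤ):ℝ)|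
          + 2*|((x (m+1) 0 0 : ℤ):ℝ)| * |ξ| := h1
      _ ≤ (5 + 2*|ξ|) * Xnorm x (m+1) := by nlinarith [abs_nonneg ξ]
  -- (3) smallness of Q(ξ)
  · have hX2pos : 0 < Xnorm x (m+2) := Xnorm_pos hx' (m+2) (by omega)
    have hX3pos : 0 < Xnorm x (m+3) := Xnorm_pos hx' (m+3) (by omega)
    have hX4pos : 0 < Xnorm x (m+4) := Xnorm_pos hx' (m+4) (by omega)
    have hl2 := (hall (m+2) (by omega)).2.1
    have hl3 := (hall (m+3) (by omega)).2.1
    have hfac := aeval_Qpoly ξ x (m+2)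
    rw [show m+2+1 = m+3 from rfl] at hfac
    have hb1 : |((x (m+2) 0 1 : ℤ):ℝ) - ((x (m+2) 0 0 : ℤ):ℝ)*ξ| ≤ cc3 / Xnorm x (m+2) := by
      rw [abs_sub_comm]; exact hl2.1
    have hb2 : |((x (m+3) 1 1 : ℤ):ℝ) - ((x (m+3) 0 1 : ℤ):ℝ)*ξ| ≤ cc3 / Xnorm x (m+3) := by
      rw [abs_sub_comm]; exact hl3.2
    have hb3 : |((x (m+2) 1 1 : ℤ):ℝ) - ((x (m+2) 0 1 : ℤ):ℝ)*ξ| ≤ cc3 / Xnorm x (m+2) := by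
      rw [abs_sub_comm]; exact hl2.2
    have hb4 : |((x (m+3) 0 1 : ℤ):ℝ) - ((x (m+3) 0 0 : ℤ):ℝ)*ξ| ≤ cc3 / Xnorm x (m+3) := by
      rw [abs_sub_comm]; exact hl3.1
    have hQbound : |Polynomial.aeval ξ (Qpoly x (m+2))|
        ≤ 2*cc3^2 / (Xnorm x (m+2) * Xnorm x (m+3)) := by
      rw [hfac]
      have hT : |((x (m+2) 0 1 : ℤ):ℝ) - ((x (m+2) 0 0 : ℤ):ℝ)*ξ|
            * |((x (m+3) 1 1 : ℤ):ℝ) - ((x (m+3) 0 1 : ℤ):ℝ)*ξ|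
          + |((x (m+2) 1 1 : ℤ):ℝ) - ((x (m+2) 0 1 : ℤ):ℝ)*ξ|
            * |((x (m+3) 0 1 : ℤ):ℝ) - ((x (m+3) 0 0 : ℤ):ℝ)*ξ|
          ≤ (cc3/Xnorm x (m+2)) * (cc3/Xnorm x (m+3))
            + (cc3/Xnorm x (m+2)) * (cc3/Xnorm x (m+3)) := by
        gcongr <;> positivity
      have habss : |(((x (m+2) 0 1 : ℤ):ℝ) - ((x (m+2) 0 0 : ℤ):ℝ)*ξ)
            * (((x (m+3) 1 1 : ℤ):ℝ) - ((x (m+3) 0 1 : ℤ):ℝ)*ξ)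
          - (((x (m+2) 1 1 : ℤ):ℝ) - ((x (m+2) 0 1 : ℤ):ℝ)*ξ)
            * (((x (m+3) 0 1 : ℤ):ℝ) - ((x (m+3) 0 0 : ℤ):ℝ)*ξ)|
          ≤ |((x (m+2) 0 1 : ℤ):ℝ) - ((x (m+2) 0 0 : ℤ):ℝ)*ξ|
            * |((x (m+3) 1 1 : ℤ):ℝ) - ((x (m+3) 0 1 : ℤ):ℝ)*ξ|
          + |((x (m+2) 1 1 : ℤ):ℝ) - ((x (m+2) 0 1 : ℤ):ℝ)*ξ|
            * |((x (m+3) 0 1 : ℤ):ℝ) - ((x (m+3) 0 0 : ℤ):ℝ)*ξ| := by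
        calc _ ≤ |(((x (m+2) 0 1 : ℤ):ℝ) - ((x (m+2) 0 0 : ℤ):ℝ)*ξ)
              * (((x (m+3) 1 1 : ℤ):ℝ) - ((x (m+3) 0 1 : ℤ):ℝ)*ξ)|
            + |(((x (m+2) 1 1 : ℤ):ℝ) - ((x (m+2) 0 1 : ℤ):ℝ)*ξ)
              * (((x (m+3) 0 1 : ℤ):ℝ) - ((x (m+3) 0 0 : ℤ):ℝ)*ξ)| := abs_sub _ _
          _ = _ := by rw [abs_mul, abs_mul]
      have : (cc3/Xnorm x (m+2)) * (cc3/Xnorm x (m+3))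
          + (cc3/Xnorm x (m+2)) * (cc3/Xnorm x (m+3))
          = 2*cc3^2 / (Xnorm x (m+2) * Xnorm x (m+3)) := by
        field_simp
        ring
      linarith
    have hgold := gold_facts
    have hgrow : Xnorm x (m+4) ≤ (cc2*cc2^(gold-1)) * (Xnorm x (m+2) * Xnorm x (m+3)) := by
      have hg3 : Xnorm x (m+4) ≤ cc2 * Xnorm x (m+3) ^ gold := by
        have := (hall (m+3) (by omega)).1.2
        simpa [show m+3+1 = m+4 from rfl] using this
      have hg2 : Xnorm x (m+3) ≤ cc2 * Xnorm x (m+2) ^ gold := by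
        have := (hall (m+2) (by omega)).1.2
        simpa [show m+2+1 = m+3 from rfl] using this
      have hsplit : Xnorm x (m+3) ^ gold = Xnorm x (m+3) * Xnorm x (m+3) ^ (gold - 1) := by
        rw [show gold = 1 + (gold - 1) from by ring, Real.rpow_add hX3pos]
        rw [Real.rpow_one]
        rw [show (1:ℝ) + (gold-1) - 1 = gold - 1 from by ring]
      have hstep : Xnorm x (m+3) ^ (gold - 1) ≤ cc2^(gold-1) * Xnorm x (m+2) := by
        have h1 : Xnorm x (m+3) ^ (gold-1) ≤ (cc2 * Xnorm x (m+2) ^ gold)^(gold-1) :=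
          Real.rpow_le_rpow (le_of_lt hX3pos) hg2 (by nlinarith [hgold.1, hgold.2])
        have h2 : (cc2 * Xnorm x (m+2) ^ gold)^(gold-1)
            = cc2^(gold-1) * (Xnorm x (m+2) ^ gold)^(gold-1) :=
          Real.mul_rpow (le_of_lt hcc2) (Real.rpow_nonneg (le_of_lt hX2pos) _)
        have h3 : (Xnorm x (m+2) ^ gold)^(gold-1) = Xnorm x (m+2) := by
          rw [← Real.rpow_mul (le_of_lt hX2pos), hgold.2, Real.rpow_one]
        rw [h2, h3] at h1
        exact h1
      calc Xnorm x (m+4) ≤ cc2 * Xnorm x (m+3) ^ gold := hg3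
        _ = cc2 * (Xnorm x (m+3) * Xnorm x (m+3) ^ (gold - 1)) := by rw [hsplit]
        _ ≤ cc2 * (Xnorm x (m+3) * (cc2^(gold-1) * Xnorm x (m+2))) := by
            have := mul_le_mul_of_nonneg_left hstep (le_of_lt hX3pos)
            nlinarith [hcc2]
        _ = (cc2*cc2^(gold-1)) * (Xnorm x (m+2) * Xnorm x (m+3)) := by ring
    have hden : 0 < Xnorm x (m+2) * Xnorm x (m+3) := mul_pos hX2pos hX3pos
    have hM : 0 < cc2*cc2^(gold-1) := mul_pos hcc2 (Real.rpow_pos_of_pos hcc2 _)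
    have hfinal : 2*cc3^2 / (Xnorm x (m+2) * Xnorm x (m+3))
        ≤ 2*cc3^2*(cc2*cc2^(gold-1)) / Xnorm x (m+4) := by
      rw [div_le_div_iff₀ hden hX4pos]
      have h6 : Xnorm x (m+4) * (2*cc3^2)
          ≤ ((cc2*cc2^(gold-1)) * (Xnorm x (m+2) * Xnorm x (m+3))) * (2*cc3^2) := by
        apply mul_le_mul_of_nonneg_right hgrow
        positivity
      nlinarith [h6]
    linarith
  -- (4) coefficient of X^2
  · rw [Qc2 hx' m]
    ring
  -- (5) linear independence
  · rw [Fintype.linearIndependent_iff]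
    intro g hg
    have hsum : g 0 • (Qpoly x (m+1)).map (Int.castRingHom ℚ)
        + g 1 • (Qpoly x (m+2)).map (Int.castRingHom ℚ)
        + g 2 • (Qpoly x (m+3)).map (Int.castRingHom ℚ) = 0 := by
      have := hg
      rw [Fin.sum_univ_three] at this
      simpa using this
    have hw0 : (Qpoly x (m+1)).coeff 0
        = x (m+1) 0 1 * x (m+2) 1 1 - x (m+1) 1 1 * x (m+2) 0 1 := by
      rw [Qpoly_coeff]; norm_num
    have hw1 : (Qpoly x (m+1)).coeff 1
        = -(x (m+1) 0 0 * x (m+2) 1 1 - x (m+1) 1 1 * x (m+2) 0 0) := by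
      rw [Qpoly_coeff]; norm_num
    have hw2 : (Qpoly x (m+1)).coeff 2
        = x (m+1) 0 0 * x (m+2) 0 1 - x (m+1) 0 1 * x (m+2) 0 0 := by
      rw [Qpoly_coeff]; norm_num
    have hu0 := Qc0 hx' m
    have hu1 := Qc1 hx' m
    have hu2 := Qc2 hx' m
    have hv0 := Qc0 hx' (m+1)
    have hv1 := Qc1 hx' (m+1)
    have hv2 := Qc2 hx' (m+1)
    rw [show m+1+2 = m+3 from rfl, show m+1+1 = m+2 from rfl] at hv0 hv1 hv2
    have hcoe : ∀ j : ℕ, g 0 * ((Qpoly x (m+1)).coeff j : ℚ)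
        + g 1 * ((Qpoly x (m+2)).coeff j : ℚ)
        + g 2 * ((Qpoly x (m+3)).coeff j : ℚ) = 0 := by
      intro j
      have := congrArg (fun P => Polynomial.coeff P j) hsum
      simpa [Polynomial.coeff_add, Polynomial.coeff_smul, Polynomial.coeff_map,
        smul_eq_mul] using this
    have h0 := hcoe 0
    have h1 := hcoe 1
    have h2 := hcoe 2
    rw [hw0, hu0, hv0] at h0
    rw [hw1, hu1, hv1] at h1
    rw [hw2, hu2, hv2] at h2
    push_cast at h0 h1 h2
    have hd1Q : ((x (m+1) 0 0 : ℚ)) * ((x (m+1) 1 1 : ℚ))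
        - ((x (m+1) 0 1 : ℚ)) * ((x (m+1) 0 1 : ℚ)) = 1 := by exact_mod_cast hd1
    have hd2Q : ((x (m+2) 0 0 : ℚ)) * ((x (m+2) 1 1 : ℚ))
        - ((x (m+2) 0 1 : ℚ)) * ((x (m+2) 0 1 : ℚ)) = 1 := by exact_mod_cast hd2
    have hRQ : 3*(((x (m+2) 0 0 : ℚ))*((x (m+1) 0 1 : ℚ)) - ((x (m+1) 0 0 : ℚ))*((x (m+2) 0 1 : ℚ)))
        + (-1:ℚ)^m*(((x (m+2) 0 0 : ℚ))*((x (m+1) 1 1 : ℚ)) + ((x (m+1) 0 0 : ℚ))*((x (m+2) 1 1 : ℚ))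
          - 2*((x (m+1) 0 1 : ℚ))*((x (m+2) 0 1 : ℚ))) = 0 := by exact_mod_cast hR
    have hEQ : ((-1:ℚ)^m)^2 = 1 := by
      rw [← pow_mul, mul_comm, pow_mul]
      norm_num
    intro i
    fin_cases i
    · show g 0 = 0
      linear_combination (norm := ring1) ((-1/2:ℚ)*((x (m+1) 0 1 : ℚ))*((x (m+2) 0 0 : ℚ))*((-1:ℚ)^m)^2 + (1/2:ℚ)*((x (m+1) 0 0 : ℚ))*((x (m+2) 0 1 : ℚ))*((-1:ℚ)^m)^2 + (-3/2:ℚ)*((x (m+1) 0 0 : ℚ))*((x (m+2) 0 0 : ℚ))*((-1:ℚ)^m))*h0 + ((-1/4:ℚ)*((x (m+1) 1 1 : ℚ))*((x (m+2) 0 0 : ℚ))*((-1:ℚ)^m)^2 + (-3/4:ℚ)*((x (m+1) 0 1 : ℚ))*((x (m+2) 0 0 : ℚ))*((-1:ℚ)^m) + (1/4:ℚ)*((x (m+1) 0 0 : ℚ))*((x (m+2) 1 1 : ℚ))*((-1:ℚ)^m)^2 + (-3/4:ℚ)*((x (m+1) 0 0 : ℚ))*((x (m+2) 0 1 : ℚ))*((-1:ℚ)^m))*h1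 + ((-1/2:ℚ)*((x (m+1) 1 1 : ℚ))*((x (m+2) 0 1 : ℚ))*((-1:ℚ)^m)^2 + (3/4:ℚ)*((x (m+1) 1 1 : ℚ))*((x (m+2) 0 0 : ℚ))*((-1:ℚ)^m) + (1/2:ℚ)*((x (m+1) 0 1 : ℚ))*((x (m+2) 1 1 : ℚ))*((-1:ℚ)^m)^2 + (-3:ℚ)*((x (m+1) 0 1 : ℚ))*((x (m+2) 0 1 : ℚ))*((-1:ℚ)^m) + (9/4:ℚ)*((x (m+1) 0 1 : ℚ))*((x (m+2) 0 0 : ℚ)) + (3/4:ℚ)*((x (m+1) 0 0 : ℚ))*((x (m+2) 1 1 : ℚ))*((-1:ℚ)^m) + (-9/4:ℚ)*((x (m+1) 0 0 : ℚ))*((x (m+2) 0 1 : ℚ)))*h2 + ((1:ℚ)*((x (m+2) 0 1 : ℚ))^2*((-1:ℚ)^m)^2*g 0 + (-1:ℚ)*((x (m+2) 0 0 : ℚ))*((x (m+2) 1 1 : ℚ))*((-1:ℚ)^m)^2*g 0)*hd1Q + ((-1:ℚ)*((-1:ℚ)^m)^2*g 0)*hd2Q + ((1/4:ℚ)*((x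 (m+1) 1 1 : ℚ))*((x (m+2) 0 0 : ℚ))*((-1:ℚ)^m)*g 0 + (-1/2:ℚ)*((x (m+1) 0 1 : ℚ))*((x (m+2) 0 1 : ℚ))*((-1:ℚ)^m)*g 0 + (3/4:ℚ)*((x (m+1) 0 1 : ℚ))*((x (m+2) 0 0 : ℚ))*g 0 + (1/4:ℚ)*((x (m+1) 0 0 : ℚ))*((x (m+2) 1 1 : ℚ))*((-1:ℚ)^m)*g 0 + (-3/4:ℚ)*((x (m+1) 0 0 : ℚ))*((x (m+2) 0 1 : ℚ))*g 0)*hRQ + ((-1:ℚ)*g 0)*hEQ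
    · show g 1 = 0
      linear_combination (norm := ring1) ((1/4:ℚ)*((x (m+1) 1 1 : ℚ))*((x (m+2) 0 0 : ℚ))^2*((-1:ℚ)^m) + (-1/2:ℚ)*((x (m+1) 0 1 : ℚ))*((x (m+2) 0 0 : ℚ))*((x (m+2) 0 1 : ℚ))*((-1:ℚ)^m) + (3/4:ℚ)*((x (m+1) 0 1 : ℚ))*((x (m+2) 0 0 : ℚ))^2 + (1/2:ℚ)*((x (m+1) 0 0 : ℚ))*((x (m+2) 0 1 : ℚ))^2*((-1:ℚ)^m) + (-1/4:ℚ)*((x (m+1) 0 0 : ℚ))*((x (m+2) 0 0 : ℚ))*((x (m+2) 1 1 : ℚ))*((-1:ℚ)^m) + (-3/4:ℚ)*((x (m+1) 0 0 : ℚ))*((x (m+2) 0 0 : ℚ))*((x (m+2) 0 1 : ℚ)))*h0 + ((1/4:ℚ)*((x (m+1) 1 1 : ℚ))*((x (m+2) 0 0 : ℚ))*((x (m+2) 0 1 : ℚ))*((-1:ℚ)^m) + (-1/2:ℚ)*((x (m+1) 0 1 : ℚ))*((x (m+2) 0 0 : ℚ))*((x (m+2) 1 1 : ℚ))*((-1:ℚ)^m)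 + (3/4:ℚ)*((x (m+1) 0 1 : ℚ))*((x (m+2) 0 0 : ℚ))*((x (m+2) 0 1 : ℚ)) + (1/4:ℚ)*((x (m+1) 0 0 : ℚ))*((x (m+2) 0 1 : ℚ))*((x (m+2) 1 1 : ℚ))*((-1:ℚ)^m) + (-3/4:ℚ)*((x (m+1) 0 0 : ℚ))*((x (m+2) 0 1 : ℚ))^2)*h1 + ((1/2:ℚ)*((x (m+1) 1 1 : ℚ))*((x (m+2) 0 1 : ℚ))^2*((-1:ℚ)^m) + (-1/4:ℚ)*((x (m+1) 1 1 : ℚ))*((x (m+2) 0 0 : ℚ))*((x (m+2) 1 1 : ℚ))*((-1:ℚ)^m) + (-1/2:ℚ)*((x (m+1) 0 1 : ℚ))*((x (m+2) 0 1 : ℚ))*((x (m+2) 1 1 : ℚ))*((-1:ℚ)^m) + (3/4:ℚ)*((x (m+1) 0 1 : ℚ))*((x (m+2) 0 0 : ℚ))*((x (m+2) 1 1 : ℚ)) + (1/4:ℚ)*((x (m+1) 0 0 : ℚ))*((x (m+2) 1 1 : ℚ))^2*((-1:ℚ)^m) + (-3/4:ℚ)*((x (m+1) 0 0 : ℚ))*((x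 (m+2) 0 1 : ℚ))*((x (m+2) 1 1 : ℚ)))*h2 + ((1:ℚ)*((x (m+2) 0 1 : ℚ))^2*((-1:ℚ)^m)^2*g 1 + (-1:ℚ)*((x (m+2) 0 0 : ℚ))*((x (m+2) 1 1 : ℚ))*((-1:ℚ)^m)^2*g 1)*hd1Q + ((-1:ℚ)*((-1:ℚ)^m)^2*g 1)*hd2Q + ((1/4:ℚ)*((x (m+1) 1 1 : ℚ))*((x (m+2) 0 0 : ℚ))*((-1:ℚ)^m)*g 1 + (-1/2:ℚ)*((x (m+1) 0 1 : ℚ))*((x (m+2) 0 1 : ℚ))*((-1:ℚ)^m)*g 1 + (3/4:ℚ)*((x (m+1) 0 1 : ℚ))*((x (m+2) 0 0 : ℚ))*g 1 + (1/4:ℚ)*((x (m+1) 0 0 : ℚ))*((x (m+2) 1 1 : ℚ))*((-1:ℚ)^m)*g 1 + (-3/4:ℚ)*((x (m+1) 0 0 : ℚ))*((x (m+2) 0 1 : ℚ))*g 1)*hRQ + ((-1:ℚ)*g 1)*hEQ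
    · show g 2 = 0
      linear_combination (norm := ring1) ((-1/2:ℚ)*((x (m+1) 0 1 : ℚ))^2*((x (m+2) 0 0 : ℚ))*((-1:ℚ)^m) + (1/4:ℚ)*((x (m+1) 0 0 : ℚ))*((x (m+1) 1 1 : ℚ))*((x (m+2) 0 0 : ℚ))*((-1:ℚ)^m) + (1/2:ℚ)*((x (m+1) 0 0 : ℚ))*((x (m+1) 0 1 : ℚ))*((x (m+2) 0 1 : ℚ))*((-1:ℚ)^m) + (-3/4:ℚ)*((x (m+1) 0 0 : ℚ))*((x (m+1) 0 1 : ℚ))*((x (m+2) 0 0 : ℚ)) + (-1/4:ℚ)*((x (m+1) 0 0 : ℚ))^2*((x (m+2) 1 1 : ℚ))*((-1:ℚ)^m) + (3/4:ℚ)*((x (m+1) 0 0 : ℚ))^2*((x (m+2) 0 1 : ℚ)))*h0 + ((-1/4:ℚ)*((x (m+1) 0 1 : ℚ))*((x (m+1) 1 1 : ℚ))*((x (m+2) 0 0 : ℚ))*((-1:ℚ)^m) + (-3/4:ℚ)*((x (m+1) 0 1 : ℚ))^2*((x (m+2) 0 0 : ℚ)) + (1/2:ℚ)*((x (m+1) 0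 0 : ℚ))*((x (m+1) 1 1 : ℚ))*((x (m+2) 0 1 : ℚ))*((-1:ℚ)^m) + (-1/4:ℚ)*((x (m+1) 0 0 : ℚ))*((x (m+1) 0 1 : ℚ))*((x (m+2) 1 1 : ℚ))*((-1:ℚ)^m) + (3/4:ℚ)*((x (m+1) 0 0 : ℚ))*((x (m+1) 0 1 : ℚ))*((x (m+2) 0 1 : ℚ)))*h1 + ((-1/4:ℚ)*((x (m+1) 1 1 : ℚ))^2*((x (m+2) 0 0 : ℚ))*((-1:ℚ)^m) + (1/2:ℚ)*((x (m+1) 0 1 : ℚ))*((x (m+1) 1 1 : ℚ))*((x (m+2) 0 1 : ℚ))*((-1:ℚ)^m) + (-3/4:ℚ)*((x (m+1) 0 1 : ℚ))*((x (m+1) 1 1 : ℚ))*((x (m+2) 0 0 : ℚ)) + (-1/2:ℚ)*((x (m+1) 0 1 : ℚ))^2*((x (m+2) 1 1 : ℚ))*((-1:ℚ)^m) + (1/4:ℚ)*((x (m+1) 0 0 : ℚ))*((x (m+1) 1 1 : ℚ))*((x (m+2) 1 1 : ℚ))*((-1:ℚ)^m) + (3/4:ℚ)*((x (m+1) 0 0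 : ℚ))*((x (m+1) 1 1 : ℚ))*((x (m+2) 0 1 : ℚ)))*h2 + ((1:ℚ)*((x (m+2) 0 1 : ℚ))^2*((-1:ℚ)^m)^2*g 2 + (-1:ℚ)*((x (m+2) 0 0 : ℚ))*((x (m+2) 1 1 : ℚ))*((-1:ℚ)^m)^2*g 2)*hd1Q + ((-1:ℚ)*((-1:ℚ)^m)^2*g 2)*hd2Q + ((1/4:ℚ)*((x (m+1) 1 1 : ℚ))*((x (m+2) 0 0 : ℚ))*((-1:ℚ)^m)*g 2 + (-1/2:ℚ)*((x (m+1) 0 1 : ℚ))*((x (m+2) 0 1 : ℚ))*((-1:ℚ)^m)*g 2 + (3/4:ℚ)*((x (m+1) 0 1 : ℚ))*((x (m+2) 0 0 : ℚ))*g 2 + (1/4:ℚ)*((x (m+1) 0 0 : ℚ))*((x (m+2) 1 1 : ℚ))*((-1:ℚ)^m)*g 2 + (-3/4:ℚ)*((x (m+1) 0 0 : ℚ))*((x (m+2) 0 1 : ℚ))*g 2)*hRQ + ((-1:ℚ)*g 2)*hEQ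
  -- (6) the three-term relation
  · rw [closedForm hx' m]
    rw [show (m+3) = m+1+2 from rfl, closedForm hx' (m+1)]
    rw [show m+1+1 = m+2 from rfl, show m+1+2 = m+3 from rfl]
    rw [Qpoly, show m+1+1 = m+2 from rfl]
    apply combo_eq
    · linear_combination ((-1:ℤ)*(x (m+1) 1 1)*(x (m+2) 0 1) + (1:ℤ)*(x (m+1) 0 1)*(x (m+2) 1 1))*hA + ((-1:ℤ)*((-1:ℤ)^m) + (1:ℤ)*(x (m+2) 0 1)^2*((-1:ℤ)^m) + (-3:ℤ)*(x (m+2) 0 0)*(x (m+2) 0 1))*hd1 + ((-1:ℤ)*((-1:ℤ)^m) + (1:ℤ)*(x (m+1) 0 1)^2*((-1:ℤ)^m) + (3:ℤ)*(x (m+1) 0 0)*(x (m+1) 0 1))*hd2 + ((-1:ℤ)*(x (m+1) 0 1)*(x (m+2) 0 1))*hR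
    · linear_combination ((-1:ℤ)*(x (m+1) 1 1)*(x (m+2) 0 0) + (1:ℤ)*(x (m+1) 0 0)*(x (m+2) 1 1))*hA + ((2:ℤ)*(x (m+2) 0 0)*(x (m+2) 0 1)*((-1:ℤ)^m) + (-3:ℤ)*(x (m+2) 0 0)^2)*hd1 + ((2:ℤ)*(x (m+1) 0 0)*(x (m+1) 0 1)*((-1:ℤ)^m) + (3:ℤ)*(x (m+1) 0 0)^2)*hd2 + ((-1:ℤ)*(x (m+1) 0 1)*(x (m+2) 0 0) + (-1:ℤ)*(x (m+1) 0 0)*(x (m+2) 0 1))*hR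
    · linear_combination ((-1:ℤ)*(x (m+1) 0 1)*(x (m+2) 0 0) + (1:ℤ)*(x (m+1) 0 0)*(x (m+2) 0 1))*hA + ((1:ℤ)*(x (m+2) 0 0)^2*((-1:ℤ)^m))*hd1 + ((1:ℤ)*(x (m+1) 0 0)^2*((-1:ℤ)^m))*hd2 + ((-1:ℤ)*(x (m+1) 0 0)*(x (m+2) 0 0))*hR
end

section
/- For every sufficiently large integer k, one has gcd(x_{k,0}, A_k) = gcd(x_{k,0}, E_k) = cont(Q_{k+1}), and this common value is 1 or 2. -/
open Polynomial Filter

/-!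
Write `x_k = (u₀ u₁; u₁ u₂)`, `x_{k+1} = (v₀ v₁; v₁ v₂)` and `ε = (-1)^k`. The recurrence expresses
`x_{k+2}, x_{k+3}, x_{k+4}` polynomially through `x_k, x_{k+1}`, and the coefficients of `Q_{k+1}`
become `ε u₀`, `2 ε u₁ - 3 u₀` and a number congruent to `-u₁ v₁ A_k` modulo `u₀`. Modulo `u₀` one
also has `2 ε ≡ -v₀ A_k` and `E_k ≡ ε u₁ A_k`, while `u₁` is invertible because
`u₀ u₂ - u₁² = 1`. Hence `gcd(u₀, A_k)` and `gcd(u₀, E_k)` agree, divide `2`, and divide the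
content of `Q_{k+1}`. Conversely a divisor `d` of the content divides `u₀`, `2` and `v₁ A_k`; since
`A_k ≡ u₁ v₁ (3 u₁ - ε u₂) (mod (u₀, 2))` it divides `A_k²`, hence `A_k`, as `d ∣ 2` is
squarefree.
-/

theorem Int.gcd_eq_gcd_of_dvd_iff {a m n : ℤ} (h : ∀ d, d ∣ a → (d ∣ m ↔ d ∣ n)) :
    Int.gcd a m = Int.gcd a n := by
  apply Nat.dvd_antisymm <;> rw [← Int.natCast_dvd_natCast] <;>
    refine Int.dvd_coe_gcd (Int.gcd_dvd_left ..) ?_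
  · exact (h _ (Int.gcd_dvd_left ..)).1 (Int.gcd_dvd_right ..)
  · exact (h _ (Int.gcd_dvd_left ..)).2 (Int.gcd_dvd_right ..)

theorem Int.dvd_of_dvd_two_of_dvd_sq {d n : ℤ} (h2 : d ∣ 2) (hn : d ∣ n ^ 2) : d ∣ n :=
  ((Int.prime_two.squarefree.squarefree_of_dvd h2).dvd_pow_iff_dvd two_ne_zero).1 hn

theorem Int.modEq_of_intCast_eq {n a b : ℤ} (h : (a : ZMod n.natAbs) = b) : a ≡ b [ZMOD n] := by
  rw [ZMod.intCast_eq_intCast_iff_dvd_sub, Int.natCast_natAbs, abs_dvd] at h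
  exact Int.modEq_iff_dvd.2 h

theorem ZMod.intCast_self_natAbs (a : ℤ) : (a : ZMod a.natAbs) = 0 :=
  (ZMod.intCast_zmod_eq_zero_iff_dvd _ _).2 (Int.natAbs_dvd.2 dvd_rfl)

theorem Polynomial.dvd_content_quadratic_iff {R : Type*} [CommRing R] [NormalizedGCDMonoid R]
    {d p q r : R} : d ∣ (C p - C q * X + C r * X ^ 2).content ↔ d ∣ p ∧ d ∣ q ∧ d ∣ r := by
  rw [dvd_content_iff_C_dvd, C_dvd_iff_dvd_coeff]
  constructor
  · intro h
    exact ⟨by simpa using h 0, by simpa using h 1, by simpa using h 2⟩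
  · rintro ⟨hp, hq, hr⟩ (_ | _ | _ | i) <;> simp [coeff_X, coeff_C, hp, hq, hr]

/-- The relations among five consecutive terms of the sequence: `x_k = (u₀ u₁; u₁ u₂)`,
`x_{k+1} = (v₀ v₁; v₁ v₂)`, `x_{k+2} = (w₀ w₁; w₁ w₂)`, `y₁ = x_{k+3,1}`, `y₂ = x_{k+3,2}`,
`z₂ = x_{k+4,2}` and `ε = (-1)^k`. The relation `symm` says `x_k M_k x_{k+1} = x_{k+1} M_{k+1} x_k`,
the others come from `x_{j+2} = x_j M_j x_{j+1}`. -/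
structure MarkoffWindow {R : Type*} [CommRing R] (ε u₀ u₁ u₂ v₀ v₁ v₂ w₀ w₁ w₂ y₁ y₂ z₂ : R) :
    Prop where
  sign_sq : ε ^ 2 = 1
  det_u : u₀ * u₂ - u₁ ^ 2 = 1
  det_v : v₀ * v₂ - v₁ ^ 2 = 1
  symm : 3 * (u₀ * v₁ - u₁ * v₀) + ε * (u₀ * v₂ + u₂ * v₀ - 2 * u₁ * v₁) = 0
  w₀_eq : w₀ = (3 * u₀ - ε * u₁) * v₀ + ε * u₀ * v₁
  w₁_eq : w₁ = (3 * u₀ - ε * u₁) * v₁ + ε * u₀ * v₂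
  w₂_eq : w₂ = (3 * u₁ - ε * u₂) * v₁ + ε * u₁ * v₂
  y₁_eq : y₁ = (3 * v₀ + ε * v₁) * w₁ - ε * v₀ * w₂
  y₂_eq : y₂ = (3 * v₁ + ε * v₂) * w₁ - ε * v₁ * w₂
  z₂_eq : z₂ = (3 * w₁ - ε * w₂) * y₁ + ε * w₁ * y₂

namespace MarkoffWindow

section CommRing

variable {R : Type*} [CommRing R] {ε u₀ u₁ u₂ v₀ v₁ v₂ w₀ w₁ w₂ y₁ y₂ z₂ : R}

theorem map {S : Type*} [CommRing S] (h : MarkoffWindow ε u₀ u₁ u₂ v₀ v₁ v₂ w₀ w₁ w₂ y₁ y₂ z₂)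
    (f : R →+* S) :
    MarkoffWindow (f ε) (f u₀) (f u₁) (f u₂) (f v₀) (f v₁) (f v₂) (f w₀) (f w₁) (f w₂) (f y₁)
      (f y₂) (f z₂) := by
  obtain ⟨hε, hu, hv, hs, rfl, rfl, rfl, rfl, rfl, rfl⟩ := h
  exact ⟨by simpa using congrArg f hε, by simpa using congrArg f hu, by simpa using congrArg f hv,
    by simpa [map_ofNat] using congrArg f hs, by simp [map_ofNat], by simp [map_ofNat],
    by simp [map_ofNat], by simp [map_ofNat], by simp [map_ofNat], by simp [map_ofNat]⟩

theorem minor₀₁ (h : MarkoffWindow ε u₀ u₁ u₂ v₀ v₁ v₂ w₀ w₁ w₂ y₁ y₂ z₂) :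
    v₀ * w₁ - v₁ * w₀ = ε * u₀ := by
  rw [h.w₀_eq, h.w₁_eq]
  linear_combination ε * u₀ * h.det_v

theorem minor₀₂ (h : MarkoffWindow ε u₀ u₁ u₂ v₀ v₁ v₂ w₀ w₁ w₂ y₁ y₂ z₂) :
    v₀ * w₂ - v₂ * w₀ = 2 * ε * u₁ - 3 * u₀ := by
  rw [h.w₀_eq, h.w₂_eq]
  linear_combination (-v₁) * h.symm + (2 * ε * u₁ - 3 * u₀) * h.det_v

theorem A_eq (h : MarkoffWindow ε u₀ u₁ u₂ v₀ v₁ v₂ w₀ w₁ w₂ y₁ y₂ z₂) :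
    u₁ * w₂ - ε * v₂ = u₁ * v₁ * (3 * u₁ - ε * u₂) + ε * v₂ * (u₀ * u₂ - 2) := by
  rw [h.w₂_eq]
  linear_combination (-ε * v₂) * h.det_u

theorem two_mul_sign_of_u₀_eq_zero (h : MarkoffWindow ε u₀ u₁ u₂ v₀ v₁ v₂ w₀ w₁ w₂ y₁ y₂ z₂)
    (hu : u₀ = 0) : 2 * ε = -(v₀ * (u₁ * w₂ - ε * v₂)) := by
  subst hu
  rw [h.w₂_eq]
  linear_combination (-u₁ * v₁) * h.symm + (2 * ε * v₁ ^ 2 - ε * v₀ * v₂) * h.det_u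
    - 2 * ε * h.det_v

theorem minor₁₂_of_u₀_eq_zero (h : MarkoffWindow ε u₀ u₁ u₂ v₀ v₁ v₂ w₀ w₁ w₂ y₁ y₂ z₂)
    (hu : u₀ = 0) : v₁ * w₂ - v₂ * w₁ = -(u₁ * v₁ * (u₁ * w₂ - ε * v₂)) := by
  subst hu
  rw [h.w₁_eq, h.w₂_eq]
  linear_combination (-3 * u₁ * v₁ ^ 2 - ε * u₁ * v₁ * v₂ + ε * u₂ * v₁ ^ 2) * h.det_u

theorem E_eq_of_u₀_eq_zero (h : MarkoffWindow ε u₀ u₁ u₂ v₀ v₁ v₂ w₀ w₁ w₂ y₁ y₂ z₂)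
    (hu : u₀ = 0) : u₁ * z₂ - 3 * ε * v₀ * y₂ - ε * w₂ = ε * u₁ * (u₁ * w₂ - ε * v₂) := by
  obtain ⟨hε, hu', hv, hs, -, rfl, rfl, rfl, rfl, rfl⟩ := h
  subst hu
  grind

end CommRing

section Int

variable {ε u₀ u₁ u₂ v₀ v₁ v₂ w₀ w₁ w₂ y₁ y₂ z₂ : ℤ}

theorem two_mul_sign_modEq (h : MarkoffWindow ε u₀ u₁ u₂ v₀ v₁ v₂ w₀ w₁ w₂ y₁ y₂ z₂) :
    2 * ε ≡ -(v₀ * (u₁ * w₂ - ε * v₂)) [ZMOD u₀] :=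
  Int.modEq_of_intCast_eq <| by
    simpa [map_ofNat] using (h.map (Int.castRingHom (ZMod u₀.natAbs))).two_mul_sign_of_u₀_eq_zero
      (ZMod.intCast_self_natAbs u₀)

theorem minor₁₂_modEq (h : MarkoffWindow ε u₀ u₁ u₂ v₀ v₁ v₂ w₀ w₁ w₂ y₁ y₂ z₂) :
    v₁ * w₂ - v₂ * w₁ ≡ -(u₁ * v₁ * (u₁ * w₂ - ε * v₂)) [ZMOD u₀] :=
  Int.modEq_of_intCast_eq <| by
    simpa [map_ofNat] using (h.map (Int.castRingHom (ZMod u₀.natAbs))).minor₁₂_of_u₀_eq_zero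
      (ZMod.intCast_self_natAbs u₀)

theorem E_modEq (h : MarkoffWindow ε u₀ u₁ u₂ v₀ v₁ v₂ w₀ w₁ w₂ y₁ y₂ z₂) :
    u₁ * z₂ - 3 * ε * v₀ * y₂ - ε * w₂ ≡ ε * u₁ * (u₁ * w₂ - ε * v₂) [ZMOD u₀] :=
  Int.modEq_of_intCast_eq <| by
    simpa [map_ofNat] using (h.map (Int.castRingHom (ZMod u₀.natAbs))).E_eq_of_u₀_eq_zero
      (ZMod.intCast_self_natAbs u₀)

theorem isUnit_sign (h : MarkoffWindow ε u₀ u₁ u₂ v₀ v₁ v₂ w₀ w₁ w₂ y₁ y₂ z₂) : IsUnit ε :=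
  IsUnit.of_mul_eq_one ε (by rw [← sq, h.sign_sq])

theorem isCoprime_u₀_u₁ (h : MarkoffWindow ε u₀ u₁ u₂ v₀ v₁ v₂ w₀ w₁ w₂ y₁ y₂ z₂) :
    IsCoprime u₀ u₁ :=
  ⟨u₂, -u₁, by linear_combination h.det_u⟩

theorem dvd_two (h : MarkoffWindow ε u₀ u₁ u₂ v₀ v₁ v₂ w₀ w₁ w₂ y₁ y₂ z₂) {d : ℤ} (hu : d ∣ u₀)
    (hA : d ∣ u₁ * w₂ - ε * v₂) : d ∣ 2 := by
  have h2ε : d ∣ 2 * ε := (h.two_mul_sign_modEq.of_dvd hu).dvd_iff.2 (hA.mul_left v₀).neg_right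
  exact h.isUnit_sign.dvd_mul_right.1 h2ε

theorem dvd_A_of_dvd_mul (h : MarkoffWindow ε u₀ u₁ u₂ v₀ v₁ v₂ w₀ w₁ w₂ y₁ y₂ z₂) {d : ℤ}
    (hu : d ∣ u₀) (h2 : d ∣ 2) (hvA : d ∣ v₁ * (u₁ * w₂ - ε * v₂)) : d ∣ u₁ * w₂ - ε * v₂ := by
  refine Int.dvd_of_dvd_two_of_dvd_sq h2 ?_
  have hsq : (u₁ * w₂ - ε * v₂) ^ 2 = v₁ * (u₁ * w₂ - ε * v₂) * (u₁ * (3 * u₁ - ε * u₂))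
      + (u₁ * w₂ - ε * v₂) * (ε * v₂ * (u₀ * u₂ - 2)) := by
    nth_rw 1 [sq, h.A_eq]
    ring
  rw [hsq]
  exact dvd_add (hvA.mul_right _) ((((hu.mul_right _).sub h2).mul_left _).mul_left _)

theorem dvd_minors_iff (h : MarkoffWindow ε u₀ u₁ u₂ v₀ v₁ v₂ w₀ w₁ w₂ y₁ y₂ z₂) {d : ℤ} :
    (d ∣ v₁ * w₂ - v₂ * w₁ ∧ d ∣ v₀ * w₂ - v₂ * w₀ ∧ d ∣ v₀ * w₁ - v₁ * w₀) ↔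
      (d ∣ u₀ ∧ d ∣ u₁ * w₂ - ε * v₂) := by
  rw [h.minor₀₂, h.minor₀₁, h.isUnit_sign.dvd_mul_left]
  constructor
  · rintro ⟨h₁₂, h₀₂, hu⟩
    have hcop : IsCoprime d u₁ := h.isCoprime_u₀_u₁.of_isCoprime_of_dvd_left hu
    have h2 : d ∣ 2 := by
      have : d ∣ 2 * ε * u₁ := by simpa using h₀₂.add (hu.mul_left 3)
      exact h.isUnit_sign.dvd_mul_right.1 (hcop.dvd_of_dvd_mul_right this)
    have hvA : d ∣ v₁ * (u₁ * w₂ - ε * v₂) := by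
      refine hcop.dvd_of_dvd_mul_left ?_
      simpa [mul_assoc] using (h.minor₁₂_modEq.of_dvd hu).dvd_iff.1 h₁₂
    exact ⟨hu, h.dvd_A_of_dvd_mul hu h2 hvA⟩
  · rintro ⟨hu, hA⟩
    refine ⟨(h.minor₁₂_modEq.of_dvd hu).dvd_iff.2 (hA.mul_left _).neg_right, ?_, hu⟩
    exact ((h.dvd_two hu hA).mul_right _).mul_right _ |>.sub (hu.mul_left 3)

theorem content_eq_gcd (h : MarkoffWindow ε u₀ u₁ u₂ v₀ v₁ v₂ w₀ w₁ w₂ y₁ y₂ z₂) :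
    (C (v₁ * w₂ - v₂ * w₁) - C (v₀ * w₂ - v₂ * w₀) * X + C (v₀ * w₁ - v₁ * w₀) * X ^ 2).content =
      (Int.gcd u₀ (u₁ * w₂ - ε * v₂) : ℤ) := by
  apply dvd_antisymm_of_normalize_eq normalize_content (Int.normalize_coe_nat _)
  · obtain ⟨hu, hA⟩ := h.dvd_minors_iff.1 (dvd_content_quadratic_iff.1 dvd_rfl)
    exact Int.dvd_coe_gcd hu hA
  · exact dvd_content_quadratic_iff.2
      (h.dvd_minors_iff.2 ⟨Int.gcd_dvd_left .., Int.gcd_dvd_right ..⟩)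

theorem gcd_E_eq (h : MarkoffWindow ε u₀ u₁ u₂ v₀ v₁ v₂ w₀ w₁ w₂ y₁ y₂ z₂) :
    Int.gcd u₀ (u₁ * z₂ - 3 * ε * v₀ * y₂ - ε * w₂) = Int.gcd u₀ (u₁ * w₂ - ε * v₂) :=
  Int.gcd_eq_gcd_of_dvd_iff fun d hd => by
    have hcop : IsCoprime d (ε * u₁) :=
      ((isCoprime_mul_unit_left_right h.isUnit_sign _ _).2
        h.isCoprime_u₀_u₁).of_isCoprime_of_dvd_left hd
    rw [(h.E_modEq.of_dvd hd).dvd_iff]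
    exact ⟨hcop.dvd_of_dvd_mul_left, (·.mul_left _)⟩

theorem gcd_eq_one_or_two (h : MarkoffWindow ε u₀ u₁ u₂ v₀ v₁ v₂ w₀ w₁ w₂ y₁ y₂ z₂) :
    Int.gcd u₀ (u₁ * w₂ - ε * v₂) = 1 ∨ Int.gcd u₀ (u₁ * w₂ - ε * v₂) = 2 :=
  (Nat.dvd_prime Nat.prime_two).1 <| Int.ofNat_dvd.1 <|
    h.dvd_two (Int.gcd_dvd_left ..) (Int.gcd_dvd_right ..)

end Int

end MarkoffWindow

theorem mul_Mmat_mul_apply (P Q : Matrix (Fin 2) (Fin 2) ℤ) (j : ℕ) (r s : Fin 2) :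
    (P * Mmat j * Q) r s = (3 * P r 0 - (-1) ^ j * P r 1) * Q 0 s + (-1) ^ j * P r 0 * Q 1 s := by
  simp [Matrix.mul_apply, Fin.sum_univ_two, Mmat, pow_succ]
  ring

theorem MarkoffSeq.markoffWindow {ξ : ℝ} {x : ℕ → Matrix (Fin 2) (Fin 2) ℤ} (hx : MarkoffSeq ξ x)
    {k : ℕ} (hk : 1 ≤ k) :
    MarkoffWindow ((-1) ^ k) (x k 0 0) (x k 0 1) (x k 1 1) (x (k + 1) 0 0) (x (k + 1) 0 1)
      (x (k + 1) 1 1) (x (k + 2) 0 0) (x (k + 2) 0 1) (x (k + 2) 1 1) (x (k + 3) 0 1)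
      (x (k + 3) 1 1) (x (k + 4) 1 1) := by
  obtain ⟨hsym, hdet, _, _, _, -, -, -, hrec⟩ := hx
  obtain ⟨rec₀', rec₀⟩ := (hrec k hk).2.2.1
  have rec₁ := (hrec (k + 1) (by omega)).2.2.1.2
  have rec₂ := (hrec (k + 2) (by omega)).2.2.1.2
  have det (j : ℕ) (hj : 1 ≤ j) : x j 0 0 * x j 1 1 - x j 0 1 ^ 2 = 1 := by
    rw [← hdet j hj, Matrix.det_fin_two, ← hsym j hj, sq]
  have sign₁ : (-1 : ℤ) ^ (k + 1) = -(-1) ^ k := by ring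
  have sign₂ : (-1 : ℤ) ^ (k + 2) = (-1) ^ k := by ring
  refine ⟨by rw [← pow_mul, mul_comm, pow_mul]; norm_num, det k hk, det (k + 1) (by omega), ?_,
    ?_, ?_, ?_, ?_, ?_, ?_⟩
  · have := congrFun (congrFun (rec₀.symm.trans rec₀') 0) 1
    rw [mul_Mmat_mul_apply, mul_Mmat_mul_apply, sign₁] at this
    linear_combination this
  · rw [rec₀, mul_Mmat_mul_apply, ← hsym (k + 1) (by omega)]
  · rw [rec₀, mul_Mmat_mul_apply]
  · rw [rec₀, mul_Mmat_mul_apply, ← hsym k hk]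
  · rw [rec₁, mul_Mmat_mul_apply, sign₁]
    ring
  · rw [rec₁, mul_Mmat_mul_apply, sign₁, ← hsym (k + 1) (by omega)]
    ring
  · rw [rec₂, mul_Mmat_mul_apply, sign₂, ← hsym (k + 2) (by omega)]

theorem stmt11 (ξ : ℝ) (x : ℕ → Matrix (Fin 2) (Fin 2) ℤ) (hx : MarkoffSeq ξ x) :
    ∃ N : ℕ, ∀ k, N ≤ k →
      (Int.gcd (x k 0 0) (x k 0 1 * x (k+2) 1 1 - (-1)^k * x (k+1) 1 1) : ℤ)
        = (Qpoly x (k+1)).content ∧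
      (Int.gcd (x k 0 0)
          (x k 0 1 * x (k+4) 1 1 - 3 * (-1)^k * x (k+1) 0 0 * x (k+3) 1 1
            - (-1)^k * x (k+2) 1 1) : ℤ)
        = (Qpoly x (k+1)).content ∧
      ((Qpoly x (k+1)).content = 1 ∨ (Qpoly x (k+1)).content = 2) := by
  refine ⟨1, fun k hk => ?_⟩
  have h := hx.markoffWindow hk
  have hQ : (Qpoly x (k + 1)).content = _ := h.content_eq_gcd
  rw [hQ, h.gcd_E_eq]
  exact ⟨rfl, rfl, by exact_mod_cast h.gcd_eq_one_or_two⟩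
end
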